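/- arXiv:1503.07249 — 8 statements merged into one kernel-verified Lean document; each statement's English description precedes it below -/
import Mathlib

section
/- The Farey map F defined by F(x) = x/(1-x) for 0 ≤ x ≤ 1/2 and F(x) = (1-x)/x for 1/2 < x ≤ 1 preserves the measure μ on [0,1] with density dμ = dx/x; that is, for every Borel set B ⊆ [0,1], μ(F⁻¹(B)) = μ(B). -/
/-!
The Farey map has the two inverse branches `y ↦ y / (1 + y)` and `y ↦ 1 / (1 + y)`, mapping
`[0, 1]` onto `[0, 1/2]` and `[1/2, 1]`, so `F⁻¹ B` is the union of the two images of `B`, which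
overlap at most in `1/2`. By the change of variables formula the `dx/x`-measure of the image of `B`
under a branch `ψ` is `∫_B |ψ'(y)| / ψ(y) dy`, and the two densities add up to
`1 / (y (1 + y)) + 1 / (1 + y) = 1 / y`.
-/

open MeasureTheory

noncomputable def farey (x : ℝ) : ℝ := if x ≤ 1/2 then x / (1 - x) else (1 - x) / x

noncomputable def fareyMeasure : Measure ℝ :=
  (volume.restrict (Set.Icc (0:ℝ) 1)).withDensity (fun x => ENNReal.ofReal (1 / x))

open Set ENNReal

lemma fareyMeasure_apply_of_subset {s : Set ℝ} (hs : s ⊆ Icc 0 1) :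
    fareyMeasure s = ∫⁻ x in s, ENNReal.ofReal (1 / x) := by
  rw [fareyMeasure, withDensity_apply' _ s, Measure.restrict_restrict' measurableSet_Icc,
    inter_eq_self_of_subset_left hs]

lemma fareyMeasure_absolutelyContinuous : fareyMeasure ≪ volume :=
  (withDensity_absolutelyContinuous _ _).trans
    (Measure.absolutelyContinuous_of_le Measure.restrict_le_self)

lemma fareyMeasure_image {s : Set ℝ} {g g' : ℝ → ℝ} (hs : MeasurableSet s)
    (hg' : ∀ y ∈ s, HasDerivWithinAt g (g' y) s y) (hg : InjOn g s)
    (hgs : MapsTo g s (Icc 0 1)) :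
    fareyMeasure (g '' s) = ∫⁻ y in s, ENNReal.ofReal |g' y| * ENNReal.ofReal (1 / g y) := by
  rw [fareyMeasure_apply_of_subset hgs.image_subset,
    lintegral_image_eq_lintegral_abs_deriv_mul hs hg' hg]

lemma farey_of_le_half {x : ℝ} (hx : x ≤ 1 / 2) : farey x = x / (1 - x) := if_pos hx

lemma farey_of_half_le {x : ℝ} (hx : 1 / 2 ≤ x) : farey x = (1 - x) / x := by
  rcases hx.eq_or_lt with rfl | hx
  · norm_num [farey]
  · exact if_neg hx.not_ge

noncomputable def fareyInvLeft (y : ℝ) : ℝ := y / (1 + y)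

noncomputable def fareyInvRight (y : ℝ) : ℝ := 1 / (1 + y)

lemma fareyInvLeft_mem_Icc {y : ℝ} (hy : y ∈ Icc 0 1) : fareyInvLeft y ∈ Icc 0 (1 / 2) := by
  obtain ⟨hy0, hy1⟩ := hy
  have : 0 < 1 + y := by linarith
  exact ⟨by unfold fareyInvLeft; positivity, by rw [fareyInvLeft, div_le_iff₀ this]; linarith⟩

lemma fareyInvRight_mem_Icc {y : ℝ} (hy : y ∈ Icc 0 1) : fareyInvRight y ∈ Icc (1 / 2) 1 := by
  obtain ⟨hy0, hy1⟩ := hy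
  have : 0 < 1 + y := by linarith
  exact ⟨by rw [fareyInvRight, le_div_iff₀ this]; linarith,
    by rw [fareyInvRight, div_le_one this]; linarith⟩

lemma farey_fareyInvLeft {y : ℝ} (hy : y ∈ Icc 0 1) : farey (fareyInvLeft y) = y := by
  have : 1 + y ≠ 0 := by linarith [hy.1]
  rw [farey_of_le_half (fareyInvLeft_mem_Icc hy).2, fareyInvLeft]
  field_simp
  ring

lemma farey_fareyInvRight {y : ℝ} (hy : y ∈ Icc 0 1) : farey (fareyInvRight y) = y := by
  have : 1 + y ≠ 0 := by linarith [hy.1]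
  rw [farey_of_half_le (fareyInvRight_mem_Icc hy).1, fareyInvRight]
  field_simp
  ring

lemma fareyInvLeft_farey {x : ℝ} (hx : x ≤ 1 / 2) : fareyInvLeft (farey x) = x := by
  have : 1 - x ≠ 0 := by linarith
  rw [farey_of_le_half hx, fareyInvLeft]
  field_simp
  ring

lemma fareyInvRight_farey {x : ℝ} (hx : 1 / 2 ≤ x) : fareyInvRight (farey x) = x := by
  have : x ≠ 0 := by linarith
  rw [farey_of_half_le hx, fareyInvRight]
  field_simp
  ring

lemma farey_preimage_inter_Icc {B : Set ℝ} (hB : B ⊆ Icc 0 1) :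
    farey ⁻¹' B ∩ Icc 0 1 = fareyInvLeft '' B ∪ fareyInvRight '' B := by
  ext x
  constructor
  · rintro ⟨hxB, -⟩
    rcases le_total x (1 / 2) with hx | hx
    · exact Or.inl ⟨farey x, hxB, fareyInvLeft_farey hx⟩
    · exact Or.inr ⟨farey x, hxB, fareyInvRight_farey hx⟩
  · rintro (⟨y, hy, rfl⟩ | ⟨y, hy, rfl⟩)
    · exact ⟨by simpa [farey_fareyInvLeft (hB hy)] using hy,
        Icc_subset_Icc_right (by norm_num) (fareyInvLeft_mem_Icc (hB hy))⟩
    · exact ⟨by simpa [farey_fareyInvRight (hB hy)] using hy,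
        Icc_subset_Icc_left (by norm_num) (fareyInvRight_mem_Icc (hB hy))⟩

lemma hasDerivAt_fareyInvLeft {y : ℝ} (hy : y ≠ -1) :
    HasDerivAt fareyInvLeft (1 / (1 + y) ^ 2) y := by
  have hy : 1 + y ≠ 0 := fun h => hy (eq_neg_of_add_eq_zero_right h)
  refine ((hasDerivAt_id' y).div ((hasDerivAt_id' y).const_add 1) hy).congr_deriv ?_
  field_simp
  ring

lemma hasDerivAt_fareyInvRight {y : ℝ} (hy : y ≠ -1) :
    HasDerivAt fareyInvRight (-(1 / (1 + y) ^ 2)) y := by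
  have hy : 1 + y ≠ 0 := fun h => hy (eq_neg_of_add_eq_zero_right h)
  refine ((hasDerivAt_const y 1).div ((hasDerivAt_id' y).const_add 1) hy).congr_deriv ?_
  field_simp
  ring

lemma fareyInvLeft_injOn : InjOn fareyInvLeft {-1}ᶜ := by
  intro a ha b hb h
  have ha : 1 + a ≠ 0 := fun h => ha (eq_neg_of_add_eq_zero_right h)
  have hb : 1 + b ≠ 0 := fun h => hb (eq_neg_of_add_eq_zero_right h)
  simp only [fareyInvLeft] at h
  field_simp at h
  linarith

lemma fareyInvRight_injOn : InjOn fareyInvRight {-1}ᶜ := by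
  intro a _ b _ h
  simpa [fareyInvRight] using h

lemma Icc_zero_one_subset_compl_neg_one : Icc (0 : ℝ) 1 ⊆ {-1}ᶜ :=
  fun _ hy => mem_compl_singleton_iff.2 fun h => by linarith [hy.1]

lemma MeasurableSet.image_fareyInvRight {B : Set ℝ} (hB : MeasurableSet B) (hB1 : B ⊆ {-1}ᶜ) :
    MeasurableSet (fareyInvRight '' B) :=
  hB.image_of_continuousOn_injOn
    (fun _ hy => (hasDerivAt_fareyInvRight (hB1 hy)).continuousAt.continuousWithinAt)
    (fareyInvRight_injOn.mono hB1)

lemma fareyInvLeft_image_inter_fareyInvRight_image_subset {B : Set ℝ} (hB1 : B ⊆ Icc 0 1) :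
    fareyInvLeft '' B ∩ fareyInvRight '' B ⊆ {1 / 2} := by
  rintro _ ⟨⟨y, hy, rfl⟩, ⟨z, hz, hyz⟩⟩
  exact le_antisymm (fareyInvLeft_mem_Icc (hB1 hy)).2 (hyz ▸ (fareyInvRight_mem_Icc (hB1 hz)).1)

lemma fareyMeasure_image_fareyInvLeft {B : Set ℝ} (hB : MeasurableSet B) (hB1 : B ⊆ Icc 0 1) :
    fareyMeasure (fareyInvLeft '' B) = ∫⁻ y in B, ENNReal.ofReal (1 / (y * (1 + y))) := by
  have hne := hB1.trans Icc_zero_one_subset_compl_neg_one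
  rw [fareyMeasure_image hB (fun y hy => (hasDerivAt_fareyInvLeft (hne hy)).hasDerivWithinAt)
    (fareyInvLeft_injOn.mono hne)
    (fun y hy => Icc_subset_Icc_right (by norm_num) (fareyInvLeft_mem_Icc (hB1 hy)))]
  refine setLIntegral_congr_fun hB fun y hy => ?_
  have : 1 + y ≠ 0 := by linarith [(hB1 hy).1]
  rw [abs_of_nonneg (by positivity), ← ofReal_mul (by positivity), fareyInvLeft, one_div_div]
  rcases eq_or_ne y 0 with rfl | hy0
  · simp -- both sides are `0` because `1 / 0 = 0`
  · field_simp

lemma fareyMeasure_image_fareyInvRight {B : Set ℝ} (hB : MeasurableSet B) (hB1 : B ⊆ Icc 0 1) :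
    fareyMeasure (fareyInvRight '' B) = ∫⁻ y in B, ENNReal.ofReal (1 / (1 + y)) := by
  have hne := hB1.trans Icc_zero_one_subset_compl_neg_one
  rw [fareyMeasure_image hB (fun y hy => (hasDerivAt_fareyInvRight (hne hy)).hasDerivWithinAt)
    (fareyInvRight_injOn.mono hne)
    (fun y hy => Icc_subset_Icc_left (by norm_num) (fareyInvRight_mem_Icc (hB1 hy)))]
  refine setLIntegral_congr_fun hB fun y hy => ?_
  have : 1 + y ≠ 0 := by linarith [(hB1 hy).1]
  rw [abs_neg, abs_of_nonneg (by positivity), ← ofReal_mul (by positivity), fareyInvRight,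
    one_div_one_div]
  field_simp

lemma ofReal_one_div_add_one_div {y : ℝ} (hy : 0 < y) :
    ENNReal.ofReal (1 / (y * (1 + y))) + ENNReal.ofReal (1 / (1 + y)) = ENNReal.ofReal (1 / y) := by
  rw [← ofReal_add (by positivity) (by positivity)]
  congr 1
  field_simp

theorem farey_measure_preserving (B : Set ℝ) (hB : MeasurableSet B)
    (hB1 : B ⊆ Set.Icc (0:ℝ) 1) :
    fareyMeasure (farey ⁻¹' B ∩ Set.Icc (0:ℝ) 1) = fareyMeasure B := by
  have hdisj : AEDisjoint fareyMeasure (fareyInvLeft '' B) (fareyInvRight '' B) :=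
    measure_mono_null (fareyInvLeft_image_inter_fareyInvRight_image_subset hB1)
      (fareyMeasure_absolutelyContinuous Real.volume_singleton)
  have hRight := hB.image_fareyInvRight (hB1.trans Icc_zero_one_subset_compl_neg_one)
  rw [farey_preimage_inter_Icc hB1, measure_union₀ hRight.nullMeasurableSet hdisj,
    fareyMeasure_image_fareyInvLeft hB hB1, fareyMeasure_image_fareyInvRight hB hB1,
    ← lintegral_add_left (by fun_prop), fareyMeasure_apply_of_subset hB1]
  refine setLIntegral_congr_fun_ae hB ?_
  filter_upwards [volume.ae_ne 0] with y hy0 hyB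
  exact ofReal_one_div_add_one_div (lt_of_le_of_ne (hB1 hyB).1 hy0.symm)
end

section
/- Let u ∈ (0,1/2), μ the measure with density 1/x on [0,1], and f : (0,1) → ℝ an increasing function in L¹(μ). Then ∫_{[u,1]} f dμ − ∫_{F⁻¹([u,1])} f dμ ≥ (f(1/(1+u)) − f(u))·log(1+u) > 0, where F is the Farey map, provided f is strictly increasing. -/
/-!
Since `F⁻¹[u, 1] = [u/(1+u), 1/(1+u)]`, the two domains of integration share `(u, 1/(1+u)]` and
the difference is `∫_{(1/(1+u), 1]} f dμ - ∫_{(u/(1+u), u]} f dμ`. Both intervals have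
`μ`-measure `log (1+u)`, and on them `f` is bounded below by `f (1/(1+u))`, resp. above by
`f u`.
-/

open MeasureTheory Set

open Real

theorem setIntegral_le_of_le_const_real {X : Type*} [MeasurableSpace X] {μ : Measure X}
    {s : Set X} {f : X → ℝ} {c : ℝ} (hs : MeasurableSet s) (hμs : μ s ≠ ⊤)
    (hf : ∀ x ∈ s, f x ≤ c) (hfint : IntegrableOn f s μ) : ∫ x in s, f x ∂μ ≤ c * μ.real s := by
  rw [mul_comm, ← smul_eq_mul, ← setIntegral_const c]
  exact setIntegral_mono_on hfint (integrableOn_const hμs) hs hf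

theorem MonotoneOn.mul_measureReal_Ioc_le_setIntegral {μ : Measure ℝ} {f : ℝ → ℝ} {s : Set ℝ}
    {b c : ℝ} (hf : MonotoneOn f s) (hb : b ∈ s) (hsub : Ioc b c ⊆ s) (hμ : μ (Ioc b c) ≠ ⊤)
    (hint : IntegrableOn f (Ioc b c) μ) : f b * μ.real (Ioc b c) ≤ ∫ x in Ioc b c, f x ∂μ :=
  setIntegral_ge_of_const_le_real measurableSet_Ioc hμ
    (fun _ hx => hf hb (hsub hx) hx.1.le) hint

theorem MonotoneOn.setIntegral_Ioc_le_mul_measureReal {μ : Measure ℝ} {f : ℝ → ℝ} {s : Set ℝ}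
    {b c : ℝ} (hf : MonotoneOn f s) (hc : c ∈ s) (hsub : Ioc b c ⊆ s) (hμ : μ (Ioc b c) ≠ ⊤)
    (hint : IntegrableOn f (Ioc b c) μ) : ∫ x in Ioc b c, f x ∂μ ≤ f c * μ.real (Ioc b c) :=
  setIntegral_le_of_le_const_real measurableSet_Ioc hμ
    (fun _ hx => hf (hsub hx) hc hx.2) hint

theorem setIntegral_Icc_sub_setIntegral_Icc {μ : Measure ℝ} [NullSingletonClass μ]
    {f : ℝ → ℝ} {a u b c : ℝ} (hau : a ≤ u) (hub : u ≤ b) (hbc : b ≤ c)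
    (hf : IntegrableOn f (Ioc a c) μ) :
    (∫ x in Icc u c, f x ∂μ) - ∫ x in Icc a b, f x ∂μ
      = (∫ x in Ioc b c, f x ∂μ) - ∫ x in Ioc a u, f x ∂μ := by
  have split {p q r : ℝ} (hpq : p ≤ q) (hqr : q ≤ r) (hpa : a ≤ p) (hrc : r ≤ c) :
      ∫ x in Ioc p r, f x ∂μ = (∫ x in Ioc p q, f x ∂μ) + ∫ x in Ioc q r, f x ∂μ := by
    rw [← setIntegral_union (Ioc_disjoint_Ioc_of_le le_rfl) measurableSet_Ioc
      (hf.mono_set (Ioc_subset_Ioc hpa (hqr.trans hrc)))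
      (hf.mono_set (Ioc_subset_Ioc (hpa.trans hpq) hrc)), Ioc_union_Ioc_eq_Ioc hpq hqr]
  rw [integral_Icc_eq_integral_Ioc, integral_Icc_eq_integral_Ioc, split hub hbc hau le_rfl,
    split hau hub le_rfl hbc]
  ring

theorem farey_preimage_Icc_inter_Icc {u : ℝ} (hu : 0 ≤ u) :
    farey ⁻¹' Icc u 1 ∩ Icc 0 1 = Icc (u / (1 + u)) (1 / (1 + u)) := by
  have h1u : 0 < 1 + u := by linarith
  ext x
  simp only [mem_inter_iff, mem_preimage, mem_Icc, farey, div_le_iff₀ h1u, le_div_iff₀ h1u]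
  split_ifs with hx
  · have hx1 : 0 < 1 - x := by linarith
    rw [le_div_iff₀ hx1, div_le_one hx1]
    constructor
    · rintro ⟨⟨h1, h2⟩, h3, h4⟩; constructor <;> nlinarith
    · rintro ⟨h1, h2⟩; refine ⟨⟨?_, ?_⟩, ?_, ?_⟩ <;> nlinarith
  · have hx0 : 0 < x := by linarith
    rw [le_div_iff₀ hx0, div_le_one hx0]
    constructor
    · rintro ⟨⟨h1, h2⟩, h3, h4⟩; constructor <;> nlinarith
    · rintro ⟨h1, h2⟩; refine ⟨⟨?_, ?_⟩, ?_, ?_⟩ <;> nlinarith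

instance : NullSingletonClass fareyMeasure := by
  unfold fareyMeasure
  infer_instance

theorem fareyMeasure_Ioc {p q : ℝ} (hp : 0 < p) (hpq : p ≤ q) (hq : q ≤ 1) :
    fareyMeasure (Ioc p q) = ENNReal.ofReal (log q - log p) := by
  have hsub : Ioc p q ⊆ Icc 0 1 := fun x hx => ⟨hp.le.trans hx.1.le, hx.2.trans hq⟩
  have hpos : ∀ x ∈ Icc p q, 0 < x := fun x hx => hp.trans_le hx.1
  have hint : IntegrableOn (fun x : ℝ => 1 / x) (Ioc p q) :=
    ((continuousOn_const.div continuousOn_id fun x hx => (hpos x hx).ne').integrableOn_Icc)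
      |>.mono_set Ioc_subset_Icc_self
  have hnonneg : 0 ≤ᵐ[volume.restrict (Ioc p q)] fun x : ℝ => 1 / x := by
    filter_upwards [ae_restrict_mem measurableSet_Ioc] with x hx
    exact (one_div_pos.2 (hpos x (Ioc_subset_Icc_self hx))).le
  rw [fareyMeasure, withDensity_apply _ measurableSet_Ioc,
    Measure.restrict_restrict measurableSet_Ioc, inter_eq_left.2 hsub,
    ← ofReal_integral_eq_lintegral_ofReal hint hnonneg, ← intervalIntegral.integral_of_le hpq,
    integral_one_div fun h => (hpos 0 (uIcc_of_le hpq ▸ h)).false,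
    log_div (hp.trans_le hpq).ne' hp.ne']

theorem fareyMeasure_Ioc_ne_top {p q : ℝ} (hp : 0 < p) (hpq : p ≤ q) (hq : q ≤ 1) :
    fareyMeasure (Ioc p q) ≠ ⊤ := by
  rw [fareyMeasure_Ioc hp hpq hq]
  exact ENNReal.ofReal_ne_top

theorem fareyMeasure_real_Ioc {p q : ℝ} (hp : 0 < p) (hpq : p ≤ q) (hq : q ≤ 1) :
    fareyMeasure.real (Ioc p q) = log q - log p := by
  rw [measureReal_def, fareyMeasure_Ioc hp hpq hq,
    ENNReal.toReal_ofReal (sub_nonneg.2 (log_le_log hp hpq))]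

theorem fareyMeasure_real_Ioc_one_div_one_add {u : ℝ} (hu : 0 ≤ u) :
    fareyMeasure.real (Ioc (1 / (1 + u)) 1) = log (1 + u) := by
  have h1u : 0 < 1 + u := by linarith
  rw [fareyMeasure_real_Ioc (by positivity) ((div_le_one h1u).2 (by linarith)) le_rfl,
    log_div one_ne_zero h1u.ne']
  simp

theorem fareyMeasure_real_Ioc_div_one_add {u : ℝ} (hu : 0 < u) (hu1 : u ≤ 1) :
    fareyMeasure.real (Ioc (u / (1 + u)) u) = log (1 + u) := by
  have h1u : 0 < 1 + u := by linarith
  rw [fareyMeasure_real_Ioc (by positivity) (div_le_self hu.le (by linarith)) hu1,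
    log_div hu.ne' h1u.ne']
  ring

theorem integral_diff_lower_bound (u : ℝ) (hu : u ∈ Set.Ioo (0:ℝ) (1/2))
    (f : ℝ → ℝ) (hmono : StrictMonoOn f (Set.Ioc (0:ℝ) 1))
    (hint : Integrable f fareyMeasure) :
    (∫ x in Set.Icc u 1, f x ∂fareyMeasure)
      - ∫ x in farey ⁻¹' (Set.Icc u 1) ∩ Set.Icc (0:ℝ) 1, f x ∂fareyMeasure
      ≥ (f (1 / (1 + u)) - f u) * Real.log (1 + u)
    ∧ (f (1 / (1 + u)) - f u) * Real.log (1 + u) > 0 := by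
  obtain ⟨hu0, hu2⟩ := hu
  have hμ_right := fareyMeasure_real_Ioc_one_div_one_add hu0.le
  have hμ_left := fareyMeasure_real_Ioc_div_one_add hu0 (by linarith)
  set a := u / (1 + u)
  set b := 1 / (1 + u)
  have ha : 0 < a := by positivity
  have hau : a < u := by rw [div_lt_iff₀ (by positivity)]; nlinarith
  have hub : u < b := by rw [lt_div_iff₀ (by positivity)]; nlinarith
  have hb1 : b < 1 := by rw [div_lt_one (by positivity)]; linarith
  have hu1 : u ∈ Ioc 0 1 := ⟨hu0, by linarith⟩
  have hb : b ∈ Ioc 0 1 := ⟨hu0.trans hub, hb1.le⟩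
  have right_ge : f b * log (1 + u) ≤ ∫ x in Ioc b 1, f x ∂fareyMeasure := by
    rw [← hμ_right]
    exact hmono.monotoneOn.mul_measureReal_Ioc_le_setIntegral hb (Ioc_subset_Ioc_left hb.1.le)
      (fareyMeasure_Ioc_ne_top hb.1 hb1.le le_rfl) hint.integrableOn
  have left_le : ∫ x in Ioc a u, f x ∂fareyMeasure ≤ f u * log (1 + u) := by
    rw [← hμ_left]
    exact hmono.monotoneOn.setIntegral_Ioc_le_mul_measureReal hu1 (Ioc_subset_Ioc ha.le hu1.2)
      (fareyMeasure_Ioc_ne_top ha hau.le hu1.2) hint.integrableOn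
  refine ⟨?_, mul_pos (sub_pos.2 (hmono hu1 hb hub)) (log_pos (by linarith))⟩
  rw [farey_preimage_Icc_inter_Icc hu0.le,
    setIntegral_Icc_sub_setIntegral_Icc hau.le hub.le hb1.le hint.integrableOn]
  linarith
end

section
/- Let F be the Farey map and 𝒞_n the n-th sum-level set, i.e., the set of x ∈ [0,1] whose regular continued fraction expansion [a₁,a₂,…] satisfies a₁ + ⋯ + a_k = n for some k. Then F⁻¹(𝒞_n) = 𝒞_{n+1} for all n ≥ 1, and hence 𝒞_n = F^{-(n-1)}([1/2, 1]). -/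
/-- The value of a finite continued fraction `[a₁,…,a_k]` with tail `t`:
`cfAux [a₁,…,a_k] t = 1/(a₁ + 1/(a₂ + ⋯ + 1/(a_k + t)))`. -/
noncomputable def cfAux : List ℕ+ → ℝ → ℝ
  | [], t => t
  | a :: l, t => 1 / ((a : ℝ) + cfAux l t)

/-- The n-th sum-level set: points of `[0,1]` admitting a continued fraction
expansion whose first `k` digits sum to `n` for some `k ≥ 1`. -/
noncomputable def sumLevel (n : ℕ) : Set ℝ :=
  {x | ∃ l : List ℕ+, l ≠ [] ∧ (l.map (fun a => (a : ℕ))).sum = n ∧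
    ∃ t ∈ Set.Icc (0:ℝ) 1, x = cfAux l t}

/-!
Writing `x = cfAux (a :: l) t = 1 / (a + z)` with `z = cfAux l t ∈ [0,1]`, the Farey map acts on
digits: it lowers `a ≥ 2` to `a - 1`, and it deletes a leading digit `1`. Conversely, `farey` has
exactly two inverse branches on `[0,1]`, `y ↦ y / (1 + y)` and `y ↦ 1 / (1 + y)`, which turn
`[a, …]` into `[a + 1, …]` and `[1, a, …]`. Either way the digit sum goes up by one, so
`F⁻¹(𝒞ₙ) = 𝒞ₙ₊₁`; iterating from `𝒞₁ = [1/2, 1]` gives the second claim.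
-/

open Set

lemma farey_mapsTo : MapsTo farey (Icc 0 1) (Icc 0 1) := by
  rintro x ⟨hx0, hx1⟩
  unfold farey
  split_ifs <;>
    exact ⟨by apply div_nonneg <;> linarith, (div_le_one (by linarith)).2 (by linarith)⟩

lemma farey_one_div_of_two_le {c : ℝ} (hc : 2 ≤ c) : farey (1 / c) = 1 / (c - 1) := by
  have hle : 1 / c ≤ 1 / 2 := one_div_le_one_div_of_le two_pos hc
  rw [farey, if_pos hle]
  field_simp [show c - 1 ≠ 0 by linarith]

lemma farey_one_div_one_add {y : ℝ} (hy : y ∈ Icc (0:ℝ) 1) : farey (1 / (1 + y)) = y := by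
  obtain ⟨hy0, hy1⟩ := hy
  rcases hy1.eq_or_lt with rfl | hy1
  · norm_num [farey]
  · have hgt : ¬ 1 / (1 + y) ≤ 1 / 2 := by
      rw [not_le, div_lt_div_iff₀ two_pos (by linarith)]; linarith
    rw [farey, if_neg hgt]
    field_simp
    ring

lemma eq_one_div_of_farey_eq_one_div {x c : ℝ} (hx : x ∈ Icc (0:ℝ) 1) (hc : 1 ≤ c)
    (h : farey x = 1 / c) : x = 1 / (c + 1) ∨ x = 1 / (1 + 1 / c) := by
  obtain ⟨hx0, hx1⟩ := hx
  unfold farey at h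
  split_ifs at h with hle
  · left
    rw [div_eq_div_iff (by linarith) (by linarith)] at h
    field_simp
    linarith
  · right
    rw [div_eq_div_iff (by linarith) (by linarith)] at h
    field_simp
    linarith

lemma cfAux_mem_Icc (l : List ℕ+) {t : ℝ} (ht : t ∈ Icc (0:ℝ) 1) : cfAux l t ∈ Icc (0:ℝ) 1 := by
  induction l with
  | nil => exact ht
  | cons a l ih =>
    have ha : (1:ℝ) ≤ a := Nat.one_le_cast.2 a.pos
    rw [cfAux]
    exact ⟨by have := ih.1; positivity, (div_le_one (by linarith [ih.1])).2 (by linarith [ih.1])⟩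

lemma farey_cfAux_one_cons (l : List ℕ+) {t : ℝ} (ht : t ∈ Icc (0:ℝ) 1) :
    farey (cfAux (1 :: l) t) = cfAux l t := by
  simpa [cfAux] using farey_one_div_one_add (cfAux_mem_Icc l ht)

lemma farey_cfAux_succ_cons (a : ℕ+) (l : List ℕ+) {t : ℝ} (ht : t ∈ Icc (0:ℝ) 1) :
    farey (cfAux ((a + 1) :: l) t) = cfAux (a :: l) t := by
  have ha : (1:ℝ) ≤ a := Nat.one_le_cast.2 a.pos
  have hz := (cfAux_mem_Icc l ht).1
  simp only [cfAux, PNat.add_coe, PNat.one_coe, Nat.cast_add, Nat.cast_one]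
  rw [farey_one_div_of_two_le (by linarith)]
  ring_nf

lemma eq_cfAux_of_farey_eq_cfAux {x : ℝ} (hx : x ∈ Icc (0:ℝ) 1) (a : ℕ+) (l : List ℕ+) {t : ℝ}
    (ht : t ∈ Icc (0:ℝ) 1) (h : farey x = cfAux (a :: l) t) :
    x = cfAux ((a + 1) :: l) t ∨ x = cfAux (1 :: a :: l) t := by
  have ha : (1:ℝ) ≤ a := Nat.one_le_cast.2 a.pos
  have hz := (cfAux_mem_Icc l ht).1
  rw [cfAux] at h
  rcases eq_one_div_of_farey_eq_one_div hx (by linarith) h with h | h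
  · left
    rw [h, cfAux]
    push_cast
    ring
  · right
    rw [h, cfAux, cfAux]
    push_cast
    ring

lemma sum_map_coe_cons (a : ℕ+) (l : List ℕ+) :
    ((a :: l).map (fun a => (a : ℕ))).sum = a + (l.map (fun a => (a : ℕ))).sum := by
  simp

lemma farey_preimage_sumLevel {n : ℕ} (hn : 1 ≤ n) :
    farey ⁻¹' sumLevel n ∩ Icc 0 1 = sumLevel (n + 1) := by
  ext x
  constructor
  · rintro ⟨⟨_ | ⟨a, l⟩, hl, hsum, t, ht, hx⟩, hxI⟩
    · exact absurd rfl hl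
    rw [sum_map_coe_cons] at hsum
    rcases eq_cfAux_of_farey_eq_cfAux hxI a l ht hx with hx' | hx'
    · refine ⟨(a + 1) :: l, List.cons_ne_nil _ _, ?_, t, ht, hx'⟩
      rw [sum_map_coe_cons, PNat.add_coe, PNat.one_coe]
      omega
    · refine ⟨1 :: a :: l, List.cons_ne_nil _ _, ?_, t, ht, hx'⟩
      rw [sum_map_coe_cons, sum_map_coe_cons, PNat.one_coe]
      omega
  · rintro ⟨_ | ⟨a, l⟩, hl, hsum, t, ht, rfl⟩
    · exact absurd rfl hl
    refine ⟨?_, cfAux_mem_Icc _ ht⟩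
    rw [sum_map_coe_cons] at hsum
    rcases eq_or_ne a 1 with rfl | ha
    · have hl : l ≠ [] := by
        rintro rfl
        simp at hsum
        omega
      rw [PNat.one_coe] at hsum
      exact ⟨l, hl, by omega, t, ht, farey_cfAux_one_cons l ht⟩
    · obtain ⟨b, rfl⟩ := PNat.exists_eq_succ_of_ne_one ha
      rw [PNat.add_coe, PNat.one_coe] at hsum
      refine ⟨b :: l, List.cons_ne_nil _ _, ?_, t, ht, farey_cfAux_succ_cons b l ht⟩
      rw [sum_map_coe_cons]
      omega

lemma sumLevel_one : sumLevel 1 = Icc (1/2 : ℝ) 1 := by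
  ext x
  constructor
  · rintro ⟨_ | ⟨a, l⟩, hl, hsum, t, ⟨ht0, ht1⟩, rfl⟩
    · exact absurd rfl hl
    rw [sum_map_coe_cons] at hsum
    have ha : (a : ℕ) = 1 := by have := a.pos; omega
    obtain rfl : l = [] := by
      rcases l with _ | ⟨b, l⟩
      · rfl
      · rw [sum_map_coe_cons] at hsum; have := b.pos; omega
    have haR : (a : ℝ) = 1 := by exact_mod_cast ha
    rw [cfAux, cfAux, haR]
    exact ⟨by rw [div_le_div_iff₀ two_pos (by linarith)]; linarith,
      (div_le_one (by linarith)).2 (by linarith)⟩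
  · rintro ⟨hx1, hx2⟩
    have hx0 : (0:ℝ) < x := by linarith
    refine ⟨[1], List.cons_ne_nil _ _, rfl, 1 / x - 1, ⟨?_, ?_⟩, ?_⟩
    · have : 1 ≤ 1 / x := by rw [le_div_iff₀ hx0]; linarith
      linarith
    · have : 1 / x ≤ 2 := by rw [div_le_iff₀ hx0]; linarith
      linarith
    · simp only [cfAux, PNat.one_coe, Nat.cast_one]
      field_simp
      ring

lemma sumLevel_succ_eq_iterate_preimage (m : ℕ) :
    sumLevel (m + 1) = farey^[m] ⁻¹' Icc (1/2 : ℝ) 1 ∩ Icc 0 1 := by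
  induction m with
  | zero =>
    rw [sumLevel_one, Function.iterate_zero, preimage_id, eq_comm, inter_eq_left]
    exact Icc_subset_Icc (by norm_num) le_rfl
  | succ m ih =>
    rw [← farey_preimage_sumLevel (Nat.le_add_left 1 m), ih, preimage_inter, inter_assoc,
      inter_eq_right.2 farey_mapsTo.subset_preimage, ← preimage_comp, ← Function.iterate_succ]

theorem sumLevel_preimage (n : ℕ) (hn : 1 ≤ n) :
    farey ⁻¹' (sumLevel n) ∩ Set.Icc (0:ℝ) 1 = sumLevel (n + 1) ∧
    sumLevel n = farey^[n - 1] ⁻¹' (Set.Icc (1/2 : ℝ) 1) ∩ Set.Icc (0:ℝ) 1 := by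
  refine ⟨farey_preimage_sumLevel hn, ?_⟩
  obtain ⟨m, rfl⟩ := Nat.exists_eq_add_of_le' hn
  exact sumLevel_succ_eq_iterate_preimage m
end

section
/- Let F̂ be the transfer operator of the Farey map, given by (F̂f)(x) = (f(x/(1+x)) + x·f(1/(1+x)))/(1+x). If f ∈ C²(0,1) satisfies f' > 0 and f'' ≤ 0, then F̂f ∈ C²(0,1) also satisfies (F̂f)' > 0 and (F̂f)'' ≤ 0. -/
/-!
With `ψ t = (1 - t) f t`, `u = x / (1 + x)` and `v = 1 / (1 + x)` one has
`F̂f = ψ ∘ u + ψ ∘ v`. Since `u' = -v' = (1 + x)⁻²`,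
`(F̂f)' = (ψ'(u) - ψ'(v)) / (1 + x)²` and
`(F̂f)'' = (ψ''(u) + ψ''(v)) / (1 + x)⁴ - 2 (F̂f)' / (1 + x)`.
The hypotheses on `f` make `ψ'' = (1 - t) f'' - 2 f'` negative on `(0, 1)`, so `ψ'` is strictly
decreasing there, and `u < v` gives `(F̂f)' > 0`, hence `(F̂f)'' < 0`.
-/

noncomputable def fareyHat (f : ℝ → ℝ) (x : ℝ) : ℝ :=
  (f (x / (1 + x)) + x * f (1 / (1 + x))) / (1 + x)

open Set Filter Topology

noncomputable def branchSum (g : ℝ → ℝ) (x : ℝ) : ℝ :=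
  g (x / (1 + x)) + g (1 / (1 + x))

noncomputable def branchDiff (g : ℝ → ℝ) (x : ℝ) : ℝ :=
  (g (x / (1 + x)) - g (1 / (1 + x))) / (1 + x) ^ 2

lemma fareyHat_eq_branchSum (f : ℝ → ℝ) {x : ℝ} (hx : 1 + x ≠ 0) :
    fareyHat f x = branchSum (fun t => (1 - t) * f t) x := by
  unfold fareyHat branchSum
  field_simp
  ring

lemma fareyHat_eventuallyEq_branchSum (f : ℝ → ℝ) {x : ℝ} (hx : -1 < x) :
    fareyHat f =ᶠ[𝓝 x] branchSum (fun t => (1 - t) * f t) := by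
  filter_upwards [Ioi_mem_nhds hx] with y hy
  exact fareyHat_eq_branchSum f (by linarith [mem_Ioi.mp hy])

lemma div_one_add_mem_Ioo {x : ℝ} (hx : 0 < x) : x / (1 + x) ∈ Ioo (0:ℝ) 1 :=
  ⟨by positivity, by rw [div_lt_one (by linarith)]; linarith⟩

lemma one_div_one_add_mem_Ioo {x : ℝ} (hx : 0 < x) : 1 / (1 + x) ∈ Ioo (0:ℝ) 1 :=
  ⟨by positivity, by rw [div_lt_one (by linarith)]; linarith⟩

lemma hasDerivAt_div_one_add {x : ℝ} (hx : 1 + x ≠ 0) :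
    HasDerivAt (fun y => y / (1 + y)) (1 / (1 + x) ^ 2) x :=
  ((hasDerivAt_id' x).div ((hasDerivAt_id' x).const_add 1) hx).congr_deriv (by ring)

lemma hasDerivAt_one_div_one_add {x : ℝ} (hx : 1 + x ≠ 0) :
    HasDerivAt (fun y => 1 / (1 + y)) (-1 / (1 + x) ^ 2) x :=
  ((hasDerivAt_const x (1:ℝ)).div ((hasDerivAt_id' x).const_add 1) hx).congr_deriv (by ring)

section Branches

variable {g g' : ℝ → ℝ} {x : ℝ}

lemma hasDerivAt_branchSum (hx : 1 + x ≠ 0)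
    (hu : HasDerivAt g (g' (x / (1 + x))) (x / (1 + x)))
    (hv : HasDerivAt g (g' (1 / (1 + x))) (1 / (1 + x))) :
    HasDerivAt (branchSum g) (branchDiff g' x) x :=
  ((hu.comp x (hasDerivAt_div_one_add hx)).add
    (hv.comp x (hasDerivAt_one_div_one_add hx))).congr_deriv (by unfold branchDiff; ring)

lemma hasDerivAt_branchDiff (hx : 1 + x ≠ 0)
    (hu : HasDerivAt g (g' (x / (1 + x))) (x / (1 + x)))
    (hv : HasDerivAt g (g' (1 / (1 + x))) (1 / (1 + x))) :
    HasDerivAt (branchDiff g)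
      (branchSum g' x / (1 + x) ^ 4 - 2 * branchDiff g x / (1 + x)) x := by
  have hsq : HasDerivAt (fun y => (1 + y) ^ 2) (2 * (1 + x)) x :=
    (((hasDerivAt_id' x).const_add 1).pow 2).congr_deriv (by ring)
  refine (((hu.comp x (hasDerivAt_div_one_add hx)).sub
    (hv.comp x (hasDerivAt_one_div_one_add hx))).div hsq (pow_ne_zero 2 hx)).congr_deriv ?_
  simp only [branchSum, branchDiff, Pi.sub_apply, Function.comp_apply]
  field_simp
  ring

lemma branchDiff_pos (hg : StrictAntiOn g (Ioo 0 1)) (hx : x ∈ Ioo (0:ℝ) 1) :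
    0 < branchDiff g x := by
  have hpos : 0 < 1 + x := by linarith [hx.1]
  have huv : x / (1 + x) < 1 / (1 + x) := by
    rw [div_lt_div_iff_of_pos_right hpos]; exact hx.2
  have hgap := hg (div_one_add_mem_Ioo hx.1) (one_div_one_add_mem_Ioo hx.1) huv
  exact div_pos (sub_pos.mpr hgap) (by positivity)

end Branches

lemma deriv_branchSum_pos_and_deriv_deriv_neg {g g₁ g₂ : ℝ → ℝ}
    (hg : ∀ t ∈ Ioo (0:ℝ) 1, HasDerivAt g (g₁ t) t)
    (hg₁ : ∀ t ∈ Ioo (0:ℝ) 1, HasDerivAt g₁ (g₂ t) t)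
    (hg₂ : ∀ t ∈ Ioo (0:ℝ) 1, g₂ t < 0) {x : ℝ} (hx : x ∈ Ioo (0:ℝ) 1) :
    0 < deriv (branchSum g) x ∧ deriv (deriv (branchSum g)) x < 0 := by
  have hpos : 0 < 1 + x := by linarith [hx.1]
  have hanti : StrictAntiOn g₁ (Ioo 0 1) :=
    strictAntiOn_of_hasDerivWithinAt_neg (convex_Ioo 0 1)
      (fun t ht => (hg₁ t ht).continuousAt.continuousWithinAt)
      (by simpa using fun t ht => (hg₁ t ht).hasDerivWithinAt) (by simpa using hg₂)
  have hderiv : deriv (branchSum g) =ᶠ[𝓝 x] branchDiff g₁ := by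
    filter_upwards [isOpen_Ioo.mem_nhds hx] with y hy
    exact (hasDerivAt_branchSum (by linarith [hy.1])
      (hg _ (div_one_add_mem_Ioo hy.1)) (hg _ (one_div_one_add_mem_Ioo hy.1))).deriv
  rw [hderiv.deriv_eq, hderiv.self_of_nhds, (hasDerivAt_branchDiff hpos.ne'
    (hg₁ _ (div_one_add_mem_Ioo hx.1)) (hg₁ _ (one_div_one_add_mem_Ioo hx.1))).deriv]
  have hD : 0 < branchDiff g₁ x := branchDiff_pos hanti hx
  have hS : branchSum g₂ x < 0 :=
    add_neg (hg₂ _ (div_one_add_mem_Ioo hx.1)) (hg₂ _ (one_div_one_add_mem_Ioo hx.1))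
  refine ⟨hD, ?_⟩
  have h1 : branchSum g₂ x / (1 + x) ^ 4 < 0 := div_neg_of_neg_of_pos hS (by positivity)
  have h2 : 0 < 2 * branchDiff g₁ x / (1 + x) := by positivity
  linarith

lemma HasDerivAt.one_sub_mul {f : ℝ → ℝ} {f' t : ℝ} (h : HasDerivAt f f' t) :
    HasDerivAt (fun s => (1 - s) * f s) ((1 - t) * f' - f t) t :=
  (((hasDerivAt_id' t).const_sub 1).mul h).congr_deriv (by ring)

lemma ContDiffOn.hasDerivAt_deriv_deriv {f : ℝ → ℝ} {s : Set ℝ} (hf : ContDiffOn ℝ 2 f s)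
    (hs : IsOpen s) {t : ℝ} (ht : t ∈ s) : HasDerivAt (deriv f) (deriv (deriv f) t) t :=
  (((hf.deriv_of_isOpen (m := 1) hs (by norm_num)).differentiableOn one_ne_zero).differentiableAt
    (hs.mem_nhds ht)).hasDerivAt

lemma contDiffOn_fareyHat {n : WithTop ℕ∞} {f : ℝ → ℝ}
    (hf : ContDiffOn ℝ n f (Ioo 0 1)) : ContDiffOn ℝ n (fareyHat f) (Ioo 0 1) := by
  have hne : ∀ y ∈ Ioo (0:ℝ) 1, 1 + y ≠ 0 := fun y hy => by linarith [hy.1]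
  have hden : ContDiffOn ℝ n (fun y : ℝ => 1 + y) (Ioo 0 1) :=
    contDiffOn_const.add contDiffOn_id
  have hu : ContDiffOn ℝ n (fun y => f (y / (1 + y))) (Ioo 0 1) :=
    hf.comp (contDiffOn_id.div hden hne) fun _ hy => div_one_add_mem_Ioo hy.1
  have hv : ContDiffOn ℝ n (fun y => f (1 / (1 + y))) (Ioo 0 1) :=
    hf.comp (contDiffOn_const.div hden hne) fun _ hy => one_div_one_add_mem_Ioo hy.1
  exact (hu.add (contDiffOn_id.mul hv)).div hden hne

theorem fareyHat_preserves_cone (f : ℝ → ℝ)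
    (hf : ContDiffOn ℝ 2 f (Set.Ioo (0:ℝ) 1))
    (hf' : ∀ x ∈ Set.Ioo (0:ℝ) 1, 0 < deriv f x)
    (hf'' : ∀ x ∈ Set.Ioo (0:ℝ) 1, deriv (deriv f) x ≤ 0) :
    ContDiffOn ℝ 2 (fareyHat f) (Set.Ioo (0:ℝ) 1) ∧
    (∀ x ∈ Set.Ioo (0:ℝ) 1, 0 < deriv (fareyHat f) x) ∧
    (∀ x ∈ Set.Ioo (0:ℝ) 1, deriv (deriv (fareyHat f)) x ≤ 0) := by
  have hf₁ : ∀ t ∈ Ioo (0:ℝ) 1, HasDerivAt f (deriv f t) t := fun t ht =>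
    ((hf.differentiableOn two_ne_zero).differentiableAt (isOpen_Ioo.mem_nhds ht)).hasDerivAt
  have hsigns := fun x (hx : x ∈ Ioo (0:ℝ) 1) =>
    deriv_branchSum_pos_and_deriv_deriv_neg (g := fun t => (1 - t) * f t)
      (g₂ := fun t => (1 - t) * deriv (deriv f) t - 2 * deriv f t)
      (fun t ht => (hf₁ t ht).one_sub_mul)
      (fun t ht => ((hf.hasDerivAt_deriv_deriv isOpen_Ioo ht).one_sub_mul.sub
        (hf₁ t ht)).congr_deriv (by ring))
      (fun t ht => by nlinarith [hf' t ht, hf'' t ht, ht.2]) hx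
  refine ⟨contDiffOn_fareyHat hf, fun x hx => ?_, fun x hx => ?_⟩
  · rw [(fareyHat_eventuallyEq_branchSum f (by linarith [hx.1])).deriv_eq]
    exact (hsigns x hx).1
  · rw [(fareyHat_eventuallyEq_branchSum f (by linarith [hx.1])).deriv.deriv_eq]
    exact (hsigns x hx).2.le
end

section
/- Let N ≥ 2 be an integer, F̂ the transfer operator of the Farey map, φ₀(x) = x, and for n ≥ 0 let F̂_n φ₀ := ∑_{k=0}^{n} F̂^k φ₀. Then for all n ≥ 0, F̂_n φ₀(1) − F̂_n φ₀(1/N) ≤ N(N−1)/2. -/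
noncomputable def phi0 : ℝ → ℝ := fun x => x

noncomputable def fareySum (n : ℕ) (x : ℝ) : ℝ :=
  ∑ k ∈ Finset.range (n + 1), (fareyHat^[k] phi0) x

/-!
The iterates `F̂^k φ₀` stay in the cone of nonnegative, nondecreasing, concave functions on
`[0,1]`. Indeed `F̂g(x) = ψ(1/(1+x))` with `ψ(v) = v g(1-v) + (1-v) g(v)`, a sum of products of
oppositely monotone nonnegative concave functions, hence concave; being symmetric about `1/2`,
`ψ` is nonincreasing on `[1/2,1]`, and `x ↦ 1/(1+x)` is decreasing and convex.

For `S_n = ∑_{k ≤ n} F̂^k φ₀`, evaluating `S_{n+1} = φ₀ + F̂ S_n` at `1/M` and using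
`S_n(M/(M+1)) ≤ S_n(1)` and `F̂^{n+1}φ₀ ≥ 0` gives
`M (S_n(1) - S_n(1/(M+1))) ≤ (M+1) (S_n(1) - S_n(1/M)) + (M+1)/M`; the induction on `N` starts
from `S_n(1) - S_n(1/2) = 1 - F̂^{n+1}φ₀(1) ≤ 1`.
-/

open Set

noncomputable def fareyFold (g : ℝ → ℝ) (v : ℝ) : ℝ := v * g (1 - v) + (1 - v) * g v

structure IsFareyCone (g : ℝ → ℝ) : Prop where
  monotoneOn : MonotoneOn g (Icc 0 1)
  concaveOn : ConcaveOn ℝ (Icc 0 1) g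
  nonneg : ∀ x ∈ Icc (0 : ℝ) 1, 0 ≤ g x

lemma ConcaveOn.comp_one_sub {g : ℝ → ℝ} (hc : ConcaveOn ℝ (Icc 0 1) g) :
    ConcaveOn ℝ (Icc 0 1) fun v => g (1 - v) := by
  refine ⟨convex_Icc 0 1, fun x hx y hy a b ha hb hab => ?_⟩
  have h := hc.2 (Icc.mem_iff_one_sub_mem.1 hx) (Icc.mem_iff_one_sub_mem.1 hy) ha hb hab
  have hpt : a • (1 - x) + b • (1 - y) = 1 - (a • x + b • y) := by
    simp only [smul_eq_mul]; linear_combination hab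
  rwa [hpt] at h

lemma ConcaveOn.antitoneOn_of_symm {h : ℝ → ℝ} (hc : ConcaveOn ℝ (Icc 0 1) h)
    (hsymm : ∀ v, h (1 - v) = h v) : AntitoneOn h (Icc (1 / 2) 1) := by
  intro v hv w hw hvw
  rcases hvw.eq_or_lt with rfl | hlt
  · rfl
  have hden : 0 < 2 * w - 1 := by linarith [hv.1]
  -- `v` lies between `1 - w` and `w`, where `h` takes the same value
  set t := (w - v) / (2 * w - 1)
  have ht : t * (2 * w - 1) = w - v := div_mul_cancel₀ _ hden.ne'
  have ht0 : 0 ≤ t := div_nonneg (by linarith) hden.le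
  have ht1 : t ≤ 1 := (div_le_one hden).2 (by linarith [hv.1])
  have hw01 : w ∈ Icc (0 : ℝ) 1 := ⟨by linarith [hw.1], hw.2⟩
  have h := hc.2 (Icc.mem_iff_one_sub_mem.1 hw01) hw01 ht0 (sub_nonneg.2 ht1) (by ring)
  have hpt : t • (1 - w) + (1 - t) • w = v := by
    simp only [smul_eq_mul]; linear_combination -ht
  rw [hpt, smul_eq_mul, smul_eq_mul, hsymm] at h
  linarith

section fareyFold

variable {g : ℝ → ℝ}

lemma fareyFold_one_sub (g : ℝ → ℝ) (v : ℝ) : fareyFold g (1 - v) = fareyFold g v := by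
  simp only [fareyFold, sub_sub_cancel]
  ring

lemma fareyFold_nonneg (hg : IsFareyCone g) {v : ℝ} (hv : v ∈ Icc (0 : ℝ) 1) :
    0 ≤ fareyFold g v := by
  have := hg.nonneg _ hv
  have := hg.nonneg _ (Icc.mem_iff_one_sub_mem.1 hv)
  have := hv.1
  have : 0 ≤ 1 - v := sub_nonneg.2 hv.2
  unfold fareyFold
  positivity

lemma concaveOn_fareyFold (hg : IsFareyCone g) : ConcaveOn ℝ (Icc 0 1) (fareyFold g) := by
  have hid : ConcaveOn ℝ (Icc (0 : ℝ) 1) fun v => v := concaveOn_id (convex_Icc 0 1)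
  have hsub : ConcaveOn ℝ (Icc (0 : ℝ) 1) fun v => 1 - v :=
    (concaveOn_const 1 (convex_Icc 0 1)).sub (convexOn_id (convex_Icc 0 1))
  have hg' : AntitoneOn (fun v => g (1 - v)) (Icc 0 1) := fun x hx y hy hxy =>
    hg.monotoneOn (Icc.mem_iff_one_sub_mem.1 hy) (Icc.mem_iff_one_sub_mem.1 hx) (by linarith)
  have h₁ := hid.mul hg.concaveOn.comp_one_sub (fun v hv => hv.1)
    (fun v hv => hg.nonneg _ (Icc.mem_iff_one_sub_mem.1 hv)) (monotoneOn_id.antivaryOn hg')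
  have hanti : AntitoneOn (fun v : ℝ => 1 - v) (Icc 0 1) := fun _ _ _ _ hxy => by linarith
  have h₂ := hsub.mul hg.concaveOn (fun v hv => sub_nonneg.2 hv.2) hg.nonneg
    (hanti.antivaryOn hg.monotoneOn)
  exact h₁.add h₂

lemma antitoneOn_fareyFold (hg : IsFareyCone g) : AntitoneOn (fareyFold g) (Icc (1 / 2) 1) :=
  (concaveOn_fareyFold hg).antitoneOn_of_symm (fareyFold_one_sub g)

end fareyFold

lemma fareyHat_eq_fareyFold (g : ℝ → ℝ) {x : ℝ} (hx : 1 + x ≠ 0) :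
    fareyHat g x = fareyFold g (1 / (1 + x)) := by
  have e : 1 - 1 / (1 + x) = x / (1 + x) := by field_simp; ring
  rw [fareyHat, fareyFold, e]
  field_simp

lemma mapsTo_one_div_one_add : MapsTo (fun x : ℝ => 1 / (1 + x)) (Icc 0 1) (Icc (1 / 2) 1) :=
  fun x hx => ⟨by rw [div_le_div_iff₀ two_pos (by linarith [hx.1])]; linarith [hx.2],
    (div_le_one (by linarith [hx.1])).2 (by linarith [hx.1])⟩

lemma image_one_div_one_add_Icc : (fun x : ℝ => 1 / (1 + x)) '' Icc 0 1 = Icc (1 / 2) 1 := by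
  refine (mapsTo_one_div_one_add.image_subset).antisymm fun v hv => ?_
  have hv0 : 0 < v := by linarith [hv.1]
  refine ⟨1 / v - 1, ⟨?_, ?_⟩, by field_simp; ring⟩
  · rw [sub_nonneg, le_div_iff₀ hv0]; linarith [hv.2]
  · rw [sub_le_iff_le_add, div_le_iff₀ hv0]; linarith [hv.1]

lemma antitoneOn_one_div_one_add : AntitoneOn (fun x : ℝ => 1 / (1 + x)) (Ici 0) :=
  fun x hx _ _ hxy => one_div_le_one_div_of_le (by linarith [mem_Ici.1 hx]) (by linarith)

lemma convexOn_one_div_one_add : ConvexOn ℝ (Ici 0) fun x : ℝ => 1 / (1 + x) := by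
  refine (((convexOn_zpow (-1)).translate_right 1).subset (fun x hx => ?_) (convex_Ici 0)).congr
    fun x _ => ?_
  · simp only [mem_preimage, mem_Ioi]; linarith [mem_Ici.1 hx]
  · simp

lemma isFareyCone_fareyHat {g : ℝ → ℝ} (hg : IsFareyCone g) : IsFareyCone (fareyHat g) := by
  have hEq : EqOn (fareyFold g ∘ fun x => 1 / (1 + x)) (fareyHat g) (Icc 0 1) :=
    fun x hx => (fareyHat_eq_fareyFold g (by linarith [hx.1])).symm
  have hfold := antitoneOn_fareyFold hg
  refine ⟨?_, ?_, fun x hx => ?_⟩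
  · exact (hfold.comp (antitoneOn_one_div_one_add.mono Icc_subset_Ici_self)
      mapsTo_one_div_one_add).congr hEq
  · refine (ConcaveOn.comp_convexOn ?_ (convexOn_one_div_one_add.subset Icc_subset_Ici_self
      (convex_Icc 0 1)) ?_).congr hEq <;> rw [image_one_div_one_add_Icc]
    · exact (concaveOn_fareyFold hg).subset (Icc_subset_Icc (by norm_num) le_rfl) (convex_Icc _ _)
    · exact hfold
  · rw [← hEq hx]
    exact fareyFold_nonneg hg (Icc_subset_Icc (by norm_num) le_rfl (mapsTo_one_div_one_add hx))

lemma isFareyCone_phi0 : IsFareyCone phi0 :=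
  ⟨monotoneOn_id, concaveOn_id (convex_Icc 0 1), fun _ hx => hx.1⟩

lemma isFareyCone_iterate_fareyHat_phi0 (k : ℕ) : IsFareyCone (fareyHat^[k] phi0) := by
  induction k with
  | zero => exact isFareyCone_phi0
  | succ k ih => rw [Function.iterate_succ_apply']; exact isFareyCone_fareyHat ih

lemma fareyHat_one (f : ℝ → ℝ) : fareyHat f 1 = f (1 / 2) := by
  norm_num [fareyHat]

lemma fareyHat_one_div (f : ℝ → ℝ) {M : ℝ} (hM : 0 < M) :
    fareyHat f (1 / M) = (M * f (1 / (M + 1)) + f (M / (M + 1))) / (M + 1) := by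
  have e₁ : 1 / M / (1 + 1 / M) = 1 / (M + 1) := by field_simp
  have e₂ : 1 / (1 + 1 / M) = M / (M + 1) := by field_simp
  rw [fareyHat, e₁, e₂]
  field_simp

lemma fareySum_le_fareySum_one (n : ℕ) {x : ℝ} (hx : x ∈ Icc (0 : ℝ) 1) :
    fareySum n x ≤ fareySum n 1 :=
  Finset.sum_le_sum fun k _ =>
    (isFareyCone_iterate_fareyHat_phi0 k).monotoneOn hx (right_mem_Icc.2 zero_le_one) hx.2

lemma fareySum_succ (n : ℕ) (x : ℝ) :
    fareySum (n + 1) x = fareySum n x + (fareyHat^[n + 1] phi0) x :=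
  Finset.sum_range_succ _ _

lemma fareySum_succ_eq_add_fareyHat (n : ℕ) (x : ℝ) :
    fareySum (n + 1) x = x + fareyHat (fareySum n) x := by
  simp only [fareySum, Finset.sum_range_succ' _ (n + 1), Function.iterate_succ_apply',
    Function.iterate_zero_apply, phi0, fareyHat, ← Finset.sum_div, Finset.sum_add_distrib,
    ← Finset.mul_sum]
  ring

lemma fareySum_one_sub_fareySum_half (n : ℕ) :
    fareySum n 1 - fareySum n (1 / 2) = 1 - (fareyHat^[n + 1] phi0) 1 := by
  have h := Finset.sum_range_sub' (fun k => (fareyHat^[k] phi0) 1) (n + 1)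
  simp only [Function.iterate_succ_apply', fareyHat_one] at h
  rw [fareySum, fareySum, ← Finset.sum_sub_distrib, h, Function.iterate_succ_apply',
    fareyHat_one]
  rfl

lemma fareySum_one_sub_fareySum_half_le (n : ℕ) : fareySum n 1 - fareySum n (1 / 2) ≤ 1 := by
  rw [fareySum_one_sub_fareySum_half]
  linarith [(isFareyCone_iterate_fareyHat_phi0 (n + 1)).nonneg 1 (right_mem_Icc.2 zero_le_one)]

lemma mul_fareySum_one_sub_fareySum_one_div_succ_le (n : ℕ) {M : ℝ} (hM : 1 ≤ M) :
    M * (fareySum n 1 - fareySum n (1 / (M + 1))) ≤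
      (M + 1) * (fareySum n 1 - fareySum n (1 / M)) + (M + 1) / M := by
  have hM0 : 0 < M := by linarith
  have hrec := fareySum_succ_eq_add_fareyHat n (1 / M)
  rw [fareySum_succ, fareyHat_one_div _ hM0] at hrec
  have hD : fareySum n (M / (M + 1)) ≤ fareySum n 1 :=
    fareySum_le_fareySum_one n ⟨by positivity, (div_le_one (by linarith)).2 (by linarith)⟩
  have hE : 0 ≤ (fareyHat^[n + 1] phi0) (1 / M) :=
    (isFareyCone_iterate_fareyHat_phi0 (n + 1)).nonneg _
      ⟨by positivity, (div_le_one hM0).2 hM⟩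
  field_simp at hrec ⊢
  linarith [mul_le_mul_of_nonneg_left hD hM0.le, mul_nonneg (by positivity : 0 ≤ M * (M + 1)) hE]

theorem fareySum_variation_bound (N : ℕ) (hN : 2 ≤ N) (n : ℕ) :
    fareySum n 1 - fareySum n (1 / (N : ℝ)) ≤ (N : ℝ) * ((N : ℝ) - 1) / 2 := by
  induction N, hN using Nat.le_induction with
  | base => norm_num; linarith [fareySum_one_sub_fareySum_half_le n]
  | succ N hN ih =>
    have hM : (2 : ℝ) ≤ N := by exact_mod_cast hN
    have hstep := mul_fareySum_one_sub_fareySum_one_div_succ_le n (by linarith : (1 : ℝ) ≤ N)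
    have hslack : ((N : ℝ) + 1) / N ≤ (N + 1) * N / 2 := by
      rw [div_le_div_iff₀ (by positivity) two_pos]
      nlinarith [mul_le_mul hM hM zero_le_two (by positivity)]
    push_cast
    refine le_of_mul_le_mul_left ?_ (by positivity : (0 : ℝ) < N)
    calc (N : ℝ) * (fareySum n 1 - fareySum n (1 / (N + 1)))
        ≤ (N + 1) * (fareySum n 1 - fareySum n (1 / N)) + (N + 1) / N := hstep
      _ ≤ (N + 1) * (N * (N - 1) / 2) + (N + 1) * N / 2 := by gcongr
      _ = N * ((N + 1) * (N + 1 - 1) / 2) := by ring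
end

section
/- Let N ≥ 2 be an integer and F the Farey map. Set A := [1/N, 1], A₀ := A, and A_n := F⁻ⁿ(A) \ ⋃_{k=0}^{n-1} F^{-k}(A) for n ≥ 1. Then A_n = [1/(n+N), 1/(n+N−1)) for all n ≥ 1. -/
lemma farey_iter_zero (n : ℕ) : farey^[n] (0:ℝ) = 0 := by
  induction n with
  | zero => rfl
  | succ k ih => rw [Function.iterate_succ_apply', ih]; simp [farey]

lemma farey_step (j x : ℝ) (hj : 2 ≤ j) (hx : x ∈ Set.Ico (1/(j+1)) (1/j)) :
    farey x ∈ Set.Ico (1/j) (1/(j-1)) := by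
  obtain ⟨h1, h2⟩ := hx
  have hj0 : (0:ℝ) < j := by linarith
  have hx0 : 0 < x := lt_of_lt_of_le (by positivity) h1
  have hxj : x * j < 1 := by
    have := (lt_div_iff₀ hj0).mp h2; linarith [this]
  have h1' : 1 ≤ x * (j + 1) := by
    have := (div_le_iff₀ (by linarith : (0:ℝ) < j + 1)).mp h1
    nlinarith
  have hxh : x ≤ 1/2 := by nlinarith
  have h1x : 0 < 1 - x := by linarith
  have hF : farey x = x / (1 - x) := if_pos hxh
  rw [hF]
  constructor
  · rw [div_le_div_iff₀ hj0 h1x]; nlinarith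
  · rw [div_lt_div_iff₀ h1x (by linarith : (0:ℝ) < j - 1)]; nlinarith

lemma farey_iter (k : ℕ) (m : ℝ) (hm : 2 ≤ m) (x : ℝ)
    (hx : x ∈ Set.Ico (1/((k:ℝ)+m)) (1/((k:ℝ)+m-1))) :
    farey^[k] x ∈ Set.Ico (1/m) (1/(m-1)) := by
  induction k generalizing x with
  | zero => simpa using hx
  | succ k ih =>
    have hx' : x ∈ Set.Ico (1/(((k:ℝ)+m)+1)) (1/((k:ℝ)+m)) := by
      obtain ⟨a, b⟩ := hx
      constructor
      · calc 1/(((k:ℝ)+m)+1) = 1/(((k+1:ℕ):ℝ)+m) := by push_cast; ring_nf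
          _ ≤ x := a
      · calc x < 1/(((k+1:ℕ):ℝ)+m-1) := b
          _ = 1/((k:ℝ)+m) := by push_cast; ring_nf
    have hstep := farey_step ((k:ℝ)+m) x (by have : (0:ℝ) ≤ (k:ℝ) := Nat.cast_nonneg k; linarith) hx' 
    rw [Function.iterate_succ_apply]
    exact ih (farey x) hstep

theorem farey_first_return_sets (N : ℕ) (hN : 2 ≤ N) (n : ℕ) (hn : 1 ≤ n) :
    (farey^[n] ⁻¹' (Set.Icc (1 / (N : ℝ)) 1) ∩ Set.Icc (0:ℝ) 1) \
        (⋃ k ∈ Finset.range n, farey^[k] ⁻¹' (Set.Icc (1 / (N : ℝ)) 1)) =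
      Set.Ico (1 / ((n : ℝ) + N)) (1 / ((n : ℝ) + N - 1)) := by
  have hN2 : (2:ℝ) ≤ (N:ℝ) := by exact_mod_cast hN
  have hn1 : (1:ℝ) ≤ (n:ℝ) := by exact_mod_cast hn
  ext x
  simp only [Set.mem_diff, Set.mem_inter_iff, Set.mem_preimage, Set.mem_Icc, Set.mem_Ico,
    Set.mem_iUnion, Finset.mem_range, not_exists, exists_prop]
  constructor
  · rintro ⟨⟨⟨hfn1, hfn2⟩, hx0, hx1⟩, hnot⟩
    push_neg at hnot
    have hxpos : 0 < x := by
      rcases lt_or_eq_of_le hx0 with h | h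
      · exact h
      · exfalso
        rw [← h, farey_iter_zero] at hfn1
        have : (0:ℝ) < 1/(N:ℝ) := by positivity
        linarith
    have hxN : x < 1 / N := by
      by_contra hc
      push_neg at hc
      have := hnot 0 (by omega)
      simp only [Function.iterate_zero, id] at this
      exact absurd hx1 (not_le.mpr (this hc))
    set M := ⌈1/x⌉₊ with hM
    have hle : 1/x ≤ (M:ℝ) := Nat.le_ceil _
    have hlt : (M:ℝ) < 1/x + 1 := Nat.ceil_lt_add_one (by positivity)
    have hNM : N < M := by
      have hx' : x * (N:ℝ) < 1 := (lt_div_iff₀ (by positivity : (0:ℝ) < (N:ℝ))).mp hxN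
      have : (N:ℝ) < 1/x := by rw [lt_div_iff₀ hxpos]; nlinarith
      exact_mod_cast this.trans_le hle
    set j := M - 1 with hj
    have hjM : (j:ℝ) = (M:ℝ) - 1 := by
      have : 1 ≤ M := by omega
      push_cast [hj, this]; ring
    have hNj : N ≤ j := by omega
    have hNjR : (N:ℝ) ≤ (j:ℝ) := by exact_mod_cast hNj
    have hM0 : (0:ℝ) < (M:ℝ) := by
      have : 0 < M := by omega
      exact_mod_cast this
    have hj0 : (0:ℝ) < (j:ℝ) := by linarith
    have hxmem : x ∈ Set.Ico (1/((j:ℝ)+1)) (1/(j:ℝ)) := by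
      constructor
      · have e : (j:ℝ)+1 = (M:ℝ) := by rw [hjM]; ring
        rw [e, div_le_iff₀ hM0]
        have := (div_le_iff₀ hxpos).mp hle
        nlinarith
      · rw [lt_div_iff₀ hj0, hjM]
        have h' : (M:ℝ) - 1 < 1/x := by linarith
        have := (lt_div_iff₀ hxpos).mp h'
        nlinarith
    rcases lt_trichotomy j (n + N - 1) with hcase | hcase | hcase
    · -- j ≤ n+N-2 : contradiction via k = j+1-N < n
      exfalso
      set k := j + 1 - N with hk
      have hkn : k < n := by omega
      have hkN : ((k:ℝ)) + (N:ℝ) = (j:ℝ) + 1 := by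
        have : k + N = j + 1 := by omega
        exact_mod_cast congrArg (Nat.cast : ℕ → ℝ) this
      have hmem : x ∈ Set.Ico (1/((k:ℝ)+(N:ℝ))) (1/((k:ℝ)+(N:ℝ)-1)) := by
        rw [hkN]; simpa using hxmem
      have hres := farey_iter k (N:ℝ) hN2 x hmem
      have h1 : 1/((N:ℝ)-1) ≤ 1 := by
        rw [div_le_one (by linarith)]; linarith
      have hgt := hnot k hkn hres.1
      linarith [hres.2]
    · -- j = n + N - 1 : done
      have hjR : (j:ℝ) = (n:ℝ) + (N:ℝ) - 1 := by
        have : j + 1 = n + N := by omega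
        have := congrArg (Nat.cast : ℕ → ℝ) this
        push_cast at this; linarith
      constructor
      · have := hxmem.1; rw [hjR] at this; convert this using 2; ring
      · have := hxmem.2; rw [hjR] at this; exact this
    · -- j ≥ n + N : contradiction, farey^[n] x < 1/N
      exfalso
      set m := (j:ℝ) + 1 - n with hm
      have hjn : (n:ℝ) + (N:ℝ) ≤ (j:ℝ) := by
        have : n + N ≤ j := by omega
        exact_mod_cast this
      have hm2 : 2 ≤ m := by rw [hm]; linarith
      have hmem : x ∈ Set.Ico (1/((n:ℝ)+m)) (1/((n:ℝ)+m-1)) := by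
        rw [hm]; constructor
        · have := hxmem.1; convert this using 2; ring
        · have := hxmem.2; convert this using 2; ring
      have hres := farey_iter n m hm2 x hmem
      have : 1/(m-1) ≤ 1/(N:ℝ) := by
        apply one_div_le_one_div_of_le (by linarith)
        rw [hm]; linarith
      linarith [hres.2]
  · rintro ⟨h1, h2⟩
    have hnN : (2:ℝ) ≤ (n:ℝ) + (N:ℝ) - 1 := by linarith
    have hxpos : 0 < x := lt_of_lt_of_le (by positivity) h1
    have hx1 : x ≤ 1 := by
      have : x < 1/((n:ℝ)+(N:ℝ)-1) := h2
      have h1le : 1/((n:ℝ)+(N:ℝ)-1) ≤ 1 := by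
        rw [div_le_one (by linarith)]; linarith
      linarith
    have hmemN : x ∈ Set.Ico (1/((n:ℝ)+(N:ℝ))) (1/((n:ℝ)+(N:ℝ)-1)) := ⟨h1, h2⟩
    have hres := farey_iter n (N:ℝ) hN2 x hmemN
    refine ⟨⟨⟨hres.1, ?_⟩, le_of_lt hxpos, hx1⟩, ?_⟩
    · have : 1/((N:ℝ)-1) ≤ 1 := by rw [div_le_one (by linarith)]; linarith
      linarith [hres.2]
    · rintro k ⟨hkn, habs, -⟩
      have hm2 : (2:ℝ) ≤ (n:ℝ) + (N:ℝ) - k := by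
        have : (k:ℝ) ≤ (n:ℝ) - 1 := by
          have : (k:ℝ) + 1 ≤ (n:ℝ) := by exact_mod_cast hkn
          linarith
        linarith
      have hmem : x ∈ Set.Ico (1/((k:ℝ)+((n:ℝ)+(N:ℝ)-k))) (1/((k:ℝ)+((n:ℝ)+(N:ℝ)-k)-1)) := by
        constructor
        · have := hmemN.1; convert this using 2; ring
        · have := hmemN.2; convert this using 2; ring
      have hres2 := farey_iter k ((n:ℝ)+(N:ℝ)-k) hm2 x hmem
      have : 1/((n:ℝ)+(N:ℝ)-k-1) ≤ 1/(N:ℝ) := by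
        apply one_div_le_one_div_of_le (by linarith)
        have : (k:ℝ) + 1 ≤ (n:ℝ) := by exact_mod_cast hkn
        linarith
      linarith [hres2.2, habs]
end

section
/- For every integer N ≥ 2 and every σ > 0, the quantity (N−1)/N + ∑_{n=1}^∞ e^{-n/σ}/((n+N)(n+N−1)) equals 1 − ∫_0^∞ e^{-x}/(⌊σx⌋ + N) dx, and satisfies (N−1)/N + ∑_{n=1}^∞ e^{-n/σ}/((n+N)(n+N−1)) = 1 + O((log σ)/σ) as σ → ∞. -/
open Real MeasureTheory Filter Set Topology Function

/-! On `[n/σ, (n+1)/σ)` the integrand equals `e^{-x}/(n+N)`, so the integral is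
`∑ (qⁿ - qⁿ⁺¹)/(n+N)` with `q = e^{-1/σ}`, and summation by parts turns this into
`1/N - ∑ qⁿ⁺¹/((n+N)(n+N+1))`, which is the identity. For the bound, `⌊σx⌋ + N ≥ 1 + σx` and
`e^{-x} ≤ 1/(1+x)` dominate the integrand by `1/((1+x)(1+σx))`, whose integral over `(0, ∞)` is
`log σ/(σ-1)` (antiderivative `log((1+σx)/(1+x))/(σ-1)`). -/

theorem floor_mul_eq_natCast_iff_mem_Ico_div {σ : ℝ} (hσ : 0 < σ) (x : ℝ) (n : ℕ) :
    ⌊σ * x⌋ = n ↔ x ∈ Ico (n / σ) ((n + 1) / σ) := by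
  rw [Int.floor_eq_iff, Int.cast_natCast, mem_Ico, div_le_iff₀ hσ, lt_div_iff₀ hσ, mul_comm x σ]

theorem iUnion_Ico_natCast_div_eq_Ici {σ : ℝ} (hσ : 0 < σ) :
    ⋃ n : ℕ, Ico ((n : ℝ) / σ) ((n + 1) / σ) = Ici 0 := by
  ext x
  simp only [mem_iUnion, mem_Ici, ← floor_mul_eq_natCast_iff_mem_Ico_div hσ]
  constructor
  · rintro ⟨n, hn⟩
    have : (0 : ℤ) ≤ ⌊σ * x⌋ := hn ▸ Int.natCast_nonneg n
    exact nonneg_of_mul_nonneg_right (by simpa using Int.floor_nonneg.1 this) hσ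
  · intro hx
    exact ⟨⌊σ * x⌋.toNat, (Int.toNat_of_nonneg (Int.floor_nonneg.2 (by positivity))).symm⟩

theorem pairwise_disjoint_Ico_natCast_div {σ : ℝ} (hσ : 0 < σ) :
    Pairwise (Disjoint on fun n : ℕ => Ico ((n : ℝ) / σ) ((n + 1) / σ)) := by
  intro m n hmn
  refine Set.disjoint_left.2 fun x hm hn => hmn ?_
  rw [← floor_mul_eq_natCast_iff_mem_Ico_div hσ] at hm hn
  exact_mod_cast hm.symm.trans hn

theorem integral_Ico_exp_neg {a b : ℝ} (hab : a ≤ b) :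
    ∫ x in Ico a b, exp (-x) = exp (-a) - exp (-b) := by
  rw [setIntegral_congr_set Ico_ae_eq_Ioc, ← intervalIntegral.integral_of_le hab,
    intervalIntegral.integral_comp_neg (fun x => exp x), integral_exp]

theorem integrableOn_exp_neg_div_floor_mul_add {σ c : ℝ} (hσ : 0 ≤ σ) (hc : 0 < c) :
    IntegrableOn (fun x => exp (-x) / (⌊σ * x⌋ + c)) (Ici 0) := by
  have hexp : IntegrableOn (fun x => exp (-x)) (Ici 0) :=
    (integrableOn_Ici_iff_integrableOn_Ioi (by simp)).2
      (by simpa using exp_neg_integrableOn_Ioi 0 one_pos)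
  refine Integrable.mono' (hexp.div_const c) ?_ ?_
  · exact (by fun_prop : Measurable fun x => exp (-x) / (⌊σ * x⌋ + c)).aestronglyMeasurable
  · filter_upwards [ae_restrict_mem measurableSet_Ici] with x (hx : 0 ≤ x)
    have hfloor : (0 : ℝ) ≤ ⌊σ * x⌋ := by exact_mod_cast Int.floor_nonneg.2 (by positivity)
    rw [norm_of_nonneg (by positivity)]
    exact div_le_div_of_nonneg_left (exp_nonneg _) hc (by linarith)

theorem hasSum_integral_exp_neg_div_floor_mul_add {σ c : ℝ} (hσ : 0 < σ) (hc : 0 < c) :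
    HasSum (fun n : ℕ => (exp (-(n : ℝ) / σ) - exp (-((n : ℝ) + 1) / σ)) / (n + c))
      (∫ x in Ioi 0, exp (-x) / (⌊σ * x⌋ + c)) := by
  have hsum := hasSum_integral_iUnion (fun _ => measurableSet_Ico)
    (pairwise_disjoint_Ico_natCast_div hσ)
    ((iUnion_Ico_natCast_div_eq_Ici hσ).symm ▸ integrableOn_exp_neg_div_floor_mul_add hσ.le hc)
  rw [iUnion_Ico_natCast_div_eq_Ici hσ, integral_Ici_eq_integral_Ioi] at hsum
  have hpiece : ∀ n : ℕ, ∫ x in Ico ((n : ℝ) / σ) ((n + 1) / σ), exp (-x) / (⌊σ * x⌋ + c) =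
      (exp (-(n : ℝ) / σ) - exp (-((n : ℝ) + 1) / σ)) / (n + c) := fun n => by
    rw [setIntegral_congr_fun measurableSet_Ico fun x hx => by
        rw [(floor_mul_eq_natCast_iff_mem_Ico_div hσ x n).2 hx, Int.cast_natCast],
      integral_div, integral_Ico_exp_neg (by gcongr; linarith), neg_div, neg_div]
  simpa only [hpiece] using hsum

/-- Summation by parts; nonnegativity of `u` is what lets the telescoped partial sums yield an
unconditional `HasSum`. -/
theorem hasSum_div_mul_of_hasSum_sub_div {u : ℕ → ℝ} {c s : ℝ} (hc : 0 < c)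
    (hu : ∀ n, 0 ≤ u n) (hlim : Tendsto (fun n : ℕ => u n / (n + c)) atTop (𝓝 0))
    (hs : HasSum (fun n : ℕ => (u n - u (n + 1)) / (n + c)) s) :
    HasSum (fun n : ℕ => u (n + 1) / ((n + 1 + c) * (n + c))) (u 0 / c - s) := by
  have hterm : ∀ n : ℕ, u (n + 1) / ((n + 1 + c) * (n + c)) =
      (u n / (n + c) - u (n + 1) / ((n + 1 : ℕ) + c)) - (u n - u (n + 1)) / (n + c) := by
    intro n
    push_cast
    field_simp
    ring
  rw [hasSum_iff_tendsto_nat_of_nonneg fun n => div_nonneg (hu _) (by positivity)]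
  simp only [hterm, Finset.sum_sub_distrib, Finset.sum_range_sub' fun n : ℕ => u n / (n + c)]
  simpa using (tendsto_const_nhds.sub hlim).sub hs.tendsto_sum_nat

theorem hasDerivAt_log_one_add_mul_div_one_add {σ x : ℝ} (hσ : 0 ≤ σ) (hx : 0 ≤ x) :
    HasDerivAt (fun y => log ((1 + σ * y) / (1 + y))) ((σ - 1) / ((1 + x) * (1 + σ * x))) x := by
  have hquot : HasDerivAt (fun y => (1 + σ * y) / (1 + y))
      ((σ * 1 * (1 + x) - (1 + σ * x) * 1) / (1 + x) ^ 2) x :=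
    (((hasDerivAt_id x).const_mul σ).const_add 1).div ((hasDerivAt_id x).const_add 1)
      (by positivity)
  convert hquot.log (by positivity) using 1
  field_simp
  ring

theorem tendsto_log_one_add_mul_div_one_add {σ : ℝ} (hσ : 0 < σ) :
    Tendsto (fun y => log ((1 + σ * y) / (1 + y))) atTop (𝓝 (log σ)) := by
  have hlim : Tendsto (fun y : ℝ => (y⁻¹ + σ) / (y⁻¹ + 1)) atTop (𝓝 σ) := by
    have := (tendsto_inv_atTop_zero.add_const σ).div (tendsto_inv_atTop_zero.add_const 1)
      (by norm_num : (0 : ℝ) + 1 ≠ 0)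
    rwa [zero_add, zero_add, div_one] at this
  refine (hlim.congr' ?_).log hσ.ne'
  filter_upwards [eventually_gt_atTop 0] with y hy
  field_simp

theorem integrableOn_sub_one_div_one_add_mul_one_add_mul {σ : ℝ} (hσ : 1 ≤ σ) :
    IntegrableOn (fun x => (σ - 1) / ((1 + x) * (1 + σ * x))) (Ioi 0) :=
  integrableOn_Ioi_deriv_of_nonneg'
    (fun _ hx => hasDerivAt_log_one_add_mul_div_one_add (by linarith) hx)
    (fun x (hx : 0 < x) => div_nonneg (by linarith) (by positivity))
    (tendsto_log_one_add_mul_div_one_add (by linarith))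

theorem integral_sub_one_div_one_add_mul_one_add_mul {σ : ℝ} (hσ : 1 ≤ σ) :
    ∫ x in Ioi 0, (σ - 1) / ((1 + x) * (1 + σ * x)) = log σ := by
  rw [integral_Ioi_of_hasDerivAt_of_nonneg'
    (fun _ hx => hasDerivAt_log_one_add_mul_div_one_add (by linarith) hx)
    (fun x (hx : 0 < x) => div_nonneg (by linarith) (by positivity))
    (tendsto_log_one_add_mul_div_one_add (by linarith))]
  simp

theorem integral_exp_neg_div_floor_mul_add_le {σ c : ℝ} (hσ : 1 < σ) (hc : 2 ≤ c) :
    ∫ x in Ioi 0, exp (-x) / (⌊σ * x⌋ + c) ≤ log σ / (σ - 1) := by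
  rw [le_div_iff₀ (sub_pos.2 hσ), ← integral_mul_const,
    ← integral_sub_one_div_one_add_mul_one_add_mul hσ.le]
  refine setIntegral_mono_on (((integrableOn_exp_neg_div_floor_mul_add (by linarith)
    (by linarith)).mono_set Ioi_subset_Ici_self).mul_const _)
    (integrableOn_sub_one_div_one_add_mul_one_add_mul hσ.le) measurableSet_Ioi
    fun x (hx : 0 < x) => ?_
  have hexp : exp (-x) ≤ 1 / (1 + x) := by
    rw [exp_neg, one_div]
    exact inv_anti₀ (by positivity) (by linarith [add_one_le_exp x])
  have hfloor : 1 + σ * x ≤ ⌊σ * x⌋ + c := by linarith [Int.sub_one_lt_floor (σ * x)]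
  calc exp (-x) / (⌊σ * x⌋ + c) * (σ - 1) ≤ 1 / (1 + x) / (1 + σ * x) * (σ - 1) := by
        gcongr
    _ = (σ - 1) / ((1 + x) * (1 + σ * x)) := by field_simp

theorem sub_one_div_add_tsum_eq_one_sub_integral {σ c : ℝ} (hσ : 0 < σ) (hc : 0 < c) :
    (c - 1) / c + ∑' n : ℕ, exp (-((n : ℝ) + 1) / σ) / (((n : ℝ) + 1 + c) * ((n : ℝ) + c)) =
      1 - ∫ x in Ioi 0, exp (-x) / (⌊σ * x⌋ + c) := by
  have hlim : Tendsto (fun n : ℕ => exp (-(n : ℝ) / σ) / (n + c)) atTop (𝓝 0) :=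
    squeeze_zero (fun n => by positivity)
      (fun n => div_le_div_of_nonneg_right (exp_le_one_iff.2
        (div_nonpos_of_nonpos_of_nonneg (neg_nonpos.2 n.cast_nonneg) hσ.le)) (by positivity))
      (tendsto_const_nhds.div_atTop (tendsto_natCast_atTop_atTop.atTop_add tendsto_const_nhds))
  have hsum := hasSum_div_mul_of_hasSum_sub_div hc (fun n => (exp_pos _).le) hlim
    (by simpa only [Nat.cast_succ] using hasSum_integral_exp_neg_div_floor_mul_add hσ hc)
  push_cast at hsum
  rw [hsum.tsum_eq, neg_zero, zero_div, exp_zero]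
  generalize ∫ x in Ioi 0, exp (-x) / (⌊σ * x⌋ + c) = I
  field_simp
  ring

theorem return_sum_asymptotics (N : ℕ) (hN : 2 ≤ N) :
    (∀ σ > (0:ℝ),
      ((N : ℝ) - 1) / N +
          ∑' n : ℕ, exp (-((n : ℝ) + 1) / σ) / (((n : ℝ) + 1 + N) * ((n : ℝ) + N)) =
        1 - ∫ x in Set.Ioi (0:ℝ), exp (-x) / ((⌊σ * x⌋ : ℝ) + N)) ∧
    (fun σ : ℝ =>
        (((N : ℝ) - 1) / N +
          ∑' n : ℕ, exp (-((n : ℝ) + 1) / σ) / (((n : ℝ) + 1 + N) * ((n : ℝ) + N))) - 1)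
      =O[atTop] fun σ => Real.log σ / σ := by
  have hN2 : (2 : ℝ) ≤ N := by exact_mod_cast hN
  have identity := fun σ (hσ : 0 < σ) =>
    sub_one_div_add_tsum_eq_one_sub_integral hσ (by linarith : (0 : ℝ) < N)
  refine ⟨identity, Asymptotics.IsBigO.of_bound 2 ?_⟩
  filter_upwards [eventually_ge_atTop 2] with σ hσ
  have hI : 0 ≤ ∫ x in Ioi 0, exp (-x) / ((⌊σ * x⌋ : ℝ) + N) :=
    setIntegral_nonneg measurableSet_Ioi fun x (hx : 0 < x) => div_nonneg (exp_nonneg _)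
      (add_nonneg (Int.cast_nonneg (Int.floor_nonneg.2 (by positivity))) (Nat.cast_nonneg _))
  have hlog : 0 ≤ log σ := log_nonneg (by linarith)
  rw [identity σ (by linarith), sub_sub_cancel_left, norm_neg, norm_of_nonneg hI,
    norm_of_nonneg (by positivity)]
  calc _ ≤ log σ / (σ - 1) := integral_exp_neg_div_floor_mul_add_le (by linarith) hN2
    _ ≤ 2 * (log σ / σ) := by
      rw [mul_div_assoc', div_le_div_iff₀ (by linarith) (by linarith)]
      nlinarith
end

section
/- Let N ≥ 2 be an integer and C := ∫_0^1 (e^{-x}−1)/x dx + ∫_1^∞ e^{-x}/x dx. Then as σ → ∞, log N + ∑_{n=1}^∞ e^{-n/σ} log((n+N)/(n+N−1)) = log(σ + N) + C + O_N((log σ)/σ). -/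
/-!
Write `δ = a / σ` with `a = N`. Since `log ((n + 1 + a) / (n + a)) = ∫ₙⁿ⁺¹ dt / (t + a)` and
`e^{-1/σ} e^{-t/σ} ≤ e^{-(n+1)/σ} ≤ e^{-t/σ}` on `[n, n + 1]`, the series `S` lies between
`e^{-1/σ} I` and `I`, where `I = ∫₀^∞ e^{-t/σ} dt / (t + a) = e^δ E₁(δ)` (substitute
`t = σ x - a`). The classical expansion `E₁(δ) = C - log δ + Ein(δ)`, with
`Ein(δ) = ∫₀^δ (1 - e^{-x}) / x dx` and `|Ein(δ)| ≤ δ`, turns the quantity to be estimated into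
`(S - I) + (e^δ - 1) E₁(δ) + Ein(δ) - (log (σ + a) - log σ)`. As `E₁(δ) = O(log σ)`, each of
the four terms is `O(log σ / σ)`.
-/

open Real MeasureTheory Filter

noncomputable def constC : ℝ :=
  (∫ x in Set.Ioc (0:ℝ) 1, (exp (-x) - 1) / x) + ∫ x in Set.Ioi (1:ℝ), exp (-x) / x

open Set Asymptotics

namespace LogSeries

lemma abs_one_sub_exp_neg_div_le_one {x : ℝ} (hx : 0 < x) : |(1 - exp (-x)) / x| ≤ 1 := by
  have h1 : exp (-x) ≤ 1 := exp_le_one_iff.2 (by linarith)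
  have h2 := add_one_le_exp (-x)
  rw [abs_div, abs_of_pos hx, abs_of_nonneg (by linarith), div_le_one hx]
  linarith

lemma integrableOn_one_sub_exp_neg_div (b : ℝ) :
    IntegrableOn (fun x => (1 - exp (-x)) / x) (Ioc 0 b) := by
  refine (integrableOn_const measure_Ioc_lt_top.ne (C := (1 : ℝ))).mono' ?_ ?_
  · exact (ContinuousOn.div (by fun_prop) continuousOn_id fun x hx => hx.1.ne')
      |>.aestronglyMeasurable measurableSet_Ioc
  · filter_upwards [ae_restrict_mem measurableSet_Ioc] with x hx
    exact abs_one_sub_exp_neg_div_le_one hx.1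

noncomputable def ein (δ : ℝ) : ℝ := ∫ x in Ioc 0 δ, (1 - exp (-x)) / x

lemma abs_ein_le {δ : ℝ} (hδ : 0 ≤ δ) : |ein δ| ≤ δ := by
  have := norm_setIntegral_le_of_norm_le_const (s := Ioc 0 δ) (μ := volume)
    (f := fun x => (1 - exp (-x)) / x) measure_Ioc_lt_top
    fun x hx => (norm_eq_abs _).trans_le (abs_one_sub_exp_neg_div_le_one hx.1)
  rwa [Real.volume_real_Ioc_of_le hδ, sub_zero, one_mul] at this

noncomputable def expIntegralE₁ (δ : ℝ) : ℝ := ∫ x in Ioi δ, exp (-x) / x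

lemma integrableOn_exp_neg_div_Ioi {δ : ℝ} (hδ : 0 < δ) :
    IntegrableOn (fun x => exp (-x) / x) (Ioi δ) := by
  refine ((exp_neg_integrableOn_Ioi δ one_pos).const_mul δ⁻¹).mono' ?_ ?_
  · exact (ContinuousOn.div (by fun_prop) continuousOn_id fun x hx => (hδ.trans hx).ne')
      |>.aestronglyMeasurable measurableSet_Ioi
  · filter_upwards [ae_restrict_mem measurableSet_Ioi] with x (hx : δ < x)
    rw [norm_of_nonneg (by have := hδ.trans hx; positivity), neg_one_mul, div_eq_inv_mul]
    gcongr

lemma constC_eq_expIntegralE₁_sub_ein : constC = expIntegralE₁ 1 - ein 1 := by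
  rw [constC, expIntegralE₁, ein, sub_eq_neg_add, ← integral_neg]
  congr 2 with x
  ring

lemma expIntegralE₁_eq_constC_sub_log_add_ein {δ : ℝ} (h0 : 0 < δ) (h1 : δ ≤ 1) :
    expIntegralE₁ δ = constC - log δ + ein δ := by
  have hE₁ : expIntegralE₁ δ = (∫ x in Ioc δ 1, exp (-x) / x) + expIntegralE₁ 1 := by
    rw [expIntegralE₁, expIntegralE₁, ← setIntegral_union (Ioc_disjoint_Ioi le_rfl)
      measurableSet_Ioi ((integrableOn_exp_neg_div_Ioi h0).mono_set Ioc_subset_Ioi_self)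
      (integrableOn_exp_neg_div_Ioi one_pos), Ioc_union_Ioi_eq_Ioi h1]
  have hein : ein 1 = ein δ + ∫ x in Ioc δ 1, (1 - exp (-x)) / x := by
    rw [ein, ein, ← setIntegral_union (Ioc_disjoint_Ioc_of_le le_rfl) measurableSet_Ioc
      (integrableOn_one_sub_exp_neg_div δ)
      ((integrableOn_one_sub_exp_neg_div 1).mono_set (Ioc_subset_Ioc_left h0.le)),
      Ioc_union_Ioc_eq_Ioc h0.le h1]
  have hinv : IntegrableOn (fun x : ℝ => 1 / x) (Ioc δ 1) :=
    (ContinuousOn.div continuousOn_const continuousOn_id fun x hx => (h0.trans_le hx.1).ne')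
      |>.integrableOn_Icc.mono_set Ioc_subset_Icc_self
  have hlog : ∫ x in Ioc δ 1, 1 / x = -log δ := by
    rw [← intervalIntegral.integral_of_le h1, integral_one_div_of_pos h0 one_pos,
      log_div one_ne_zero h0.ne', log_one, zero_sub]
  have hsplit : ∫ x in Ioc δ 1, exp (-x) / x
      = (∫ x in Ioc δ 1, 1 / x) - ∫ x in Ioc δ 1, (1 - exp (-x)) / x := by
    rw [← integral_sub hinv
      ((integrableOn_one_sub_exp_neg_div 1).mono_set (Ioc_subset_Ioc_left h0.le))]
    congr 1 with x
    ring
  rw [hE₁, hsplit, hlog, constC_eq_expIntegralE₁_sub_ein]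
  linarith

lemma setIntegral_Ioi_comp_add_right {E : Type*} [NormedAddCommGroup E] [NormedSpace ℝ E]
    (f : ℝ → E) (a d : ℝ) : ∫ x in Ioi a, f (x + d) = ∫ x in Ioi (a + d), f x := by
  simpa using (measurePreserving_add_right volume d).setIntegral_preimage_emb
    (measurableEmbedding_addRight d) f (Ioi (a + d))

lemma integral_exp_neg_div_div_add {a σ : ℝ} (ha : 0 < a) (hσ : 0 < σ) :
    ∫ t in Ioi 0, exp (-t / σ) / (t + a) = exp (a / σ) * expIntegralE₁ (a / σ) := by
  have hsub : ∀ x ∈ Ioi (a / σ), exp (a / σ) * (exp (-x) / x)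
      = σ * (exp (-(σ * x - a) / σ) / (σ * x)) := by
    intro x (hx : a / σ < x)
    have : 0 < x := (div_pos ha hσ).trans hx
    rw [mul_div_assoc', ← exp_add]
    field_simp
    ring_nf
  rw [expIntegralE₁, ← integral_const_mul, setIntegral_congr_fun measurableSet_Ioi hsub,
    integral_const_mul, integral_comp_mul_left_Ioi (fun u => exp (-(u - a) / σ) / u) _ hσ,
    mul_div_cancel₀ _ hσ.ne', smul_eq_mul, mul_inv_cancel_left₀ hσ.ne',
    ← zero_add a, ← setIntegral_Ioi_comp_add_right, zero_add]
  simp only [add_sub_cancel_right]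

lemma integrableOn_exp_neg_div_div_add {a σ : ℝ} (ha : 0 < a) (hσ : 0 < σ) :
    IntegrableOn (fun t => exp (-t / σ) / (t + a)) (Ioi 0) := by
  refine ((exp_neg_integrableOn_Ioi 0 (inv_pos.2 hσ)).const_mul a⁻¹).mono' ?_ ?_
  · exact (ContinuousOn.div (by fun_prop) (by fun_prop) fun t (ht : 0 < t) => by positivity)
      |>.aestronglyMeasurable measurableSet_Ioi
  · filter_upwards [ae_restrict_mem measurableSet_Ioi] with t (ht : 0 < t)
    rw [norm_of_nonneg (by positivity), show -σ⁻¹ * t = -t / σ by ring, div_eq_inv_mul]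
    gcongr
    linarith

lemma hasSum_integral_Ioc_nat {f : ℝ → ℝ} (hf : IntegrableOn f (Ioi 0)) :
    HasSum (fun n : ℕ => ∫ t in Ioc (n : ℝ) (n + 1), f t) (∫ t in Ioi 0, f t) := by
  have hU : ⋃ n : ℕ, Ioc (n : ℝ) (n + 1) = Ioi 0 := by
    simpa using iUnion_Ioc_map_succ_eq_Ioi (f := ((↑) : ℕ → ℝ)) (fun n => by simp)
      fun ⟨b, hb⟩ => (exists_nat_gt b).elim fun n hn => hn.not_ge (hb ⟨n, rfl⟩)
  have hD := Nat.mono_cast.pairwise_disjoint_on_Ioc_succ (β := ℝ)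
  simp only [Order.succ_eq_add_one, Nat.cast_add_one] at hD
  rw [← hU] at hf ⊢
  exact hasSum_integral_iUnion (fun _ => measurableSet_Ioc) hD hf

lemma log_div_eq_integral {x a : ℝ} (h : 0 < x + a) :
    log ((x + 1 + a) / (x + a)) = ∫ t in x..x + 1, 1 / (t + a) := by
  rw [intervalIntegral.integral_comp_add_right (fun t => 1 / t),
    integral_one_div_of_pos h (by linarith), add_right_comm]

lemma intervalIntegrable_div_add {g : ℝ → ℝ} (hg : Continuous g) {x a : ℝ} (h : 0 < x + a) :
    IntervalIntegrable (fun t => g t / (t + a)) volume x (x + 1) :=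
  (hg.continuousOn.div (by fun_prop) fun t ht => by
    rw [uIcc_of_le (by linarith)] at ht
    linarith [ht.1]).intervalIntegrable

section Terms

variable {x a σ : ℝ}

lemma exp_mul_log_div_le_integral (hxa : 0 < x + a) (hσ : 0 < σ) :
    exp (-(x + 1) / σ) * log ((x + 1 + a) / (x + a))
      ≤ ∫ t in Ioc x (x + 1), exp (-t / σ) / (t + a) := by
  rw [log_div_eq_integral hxa, ← intervalIntegral.integral_const_mul,
    ← intervalIntegral.integral_of_le (by linarith)]
  refine intervalIntegral.integral_mono_on (by linarith) ?_
    (intervalIntegrable_div_add (by fun_prop) hxa) fun t ht => ?_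
  · simpa only [mul_one_div] using intervalIntegrable_div_add continuous_const hxa
  · have : 0 < t + a := by linarith [ht.1]
    rw [mul_one_div]
    gcongr
    linarith [ht.2]

lemma exp_mul_integral_le_exp_mul_log_div (hxa : 0 < x + a) (hσ : 0 < σ) :
    exp (-(1 / σ)) * ∫ t in Ioc x (x + 1), exp (-t / σ) / (t + a)
      ≤ exp (-(x + 1) / σ) * log ((x + 1 + a) / (x + a)) := by
  rw [log_div_eq_integral hxa, ← intervalIntegral.integral_const_mul,
    ← intervalIntegral.integral_of_le (by linarith), ← intervalIntegral.integral_const_mul]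
  refine intervalIntegral.integral_mono_on (by linarith)
    ((intervalIntegrable_div_add (by fun_prop) hxa).const_mul _) ?_ fun t ht => ?_
  · simpa only [mul_one_div] using intervalIntegrable_div_add continuous_const hxa
  · have : 0 < t + a := by linarith [ht.1]
    rw [mul_one_div, mul_div_assoc', ← exp_add, neg_div, neg_div, ← neg_add, ← add_div,
      add_comm 1 t]
    gcongr
    linarith [ht.1]

end Terms

noncomputable def dampedLogSeries (a σ : ℝ) : ℝ :=
  ∑' n : ℕ, exp (-((n : ℝ) + 1) / σ) * log (((n : ℝ) + 1 + a) / ((n : ℝ) + a))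

lemma abs_dampedLogSeries_sub_le {a σ : ℝ} (ha : 0 < a) (hσ : 0 < σ) :
    |dampedLogSeries a σ - exp (a / σ) * expIntegralE₁ (a / σ)|
      ≤ σ⁻¹ * (exp (a / σ) * expIntegralE₁ (a / σ)) := by
  rw [← integral_exp_neg_div_div_add ha hσ]
  set I := ∫ t in Ioi 0, exp (-t / σ) / (t + a)
  have hA := hasSum_integral_Ioc_nat (integrableOn_exp_neg_div_div_add ha hσ)
  have hpos (n : ℕ) : 0 < (n : ℝ) + a := by positivity
  have hup (n : ℕ) := exp_mul_log_div_le_integral (hpos n) hσ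
  have hlow (n : ℕ) := exp_mul_integral_le_exp_mul_log_div (hpos n) hσ
  have hS : Summable fun n : ℕ =>
      exp (-((n : ℝ) + 1) / σ) * log (((n : ℝ) + 1 + a) / ((n : ℝ) + a)) :=
    hA.summable.of_nonneg_of_le (fun n => mul_nonneg (exp_pos _).le
      (log_nonneg ((one_le_div (hpos n)).2 (by linarith)))) hup
  have hSI : dampedLogSeries a σ ≤ I := (hS.tsum_le_tsum hup hA.summable).trans_eq hA.tsum_eq
  have hIS : exp (-(1 / σ)) * I ≤ dampedLogSeries a σ :=
    (hA.mul_left _).tsum_eq.symm.trans_le ((hA.mul_left _).summable.tsum_le_tsum hlow hS)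
  have hI : 0 ≤ I := setIntegral_nonneg measurableSet_Ioi fun t (ht : 0 < t) => by positivity
  have hexp : 1 - σ⁻¹ ≤ exp (-(1 / σ)) := by
    rw [← one_div]; linarith [add_one_le_exp (-(1 / σ))]
  rw [abs_sub_comm, abs_of_nonneg (by linarith)]
  nlinarith

section Asymptotics

variable {a : ℝ}

lemma inv_isBigO_inv_mul_log : (fun σ : ℝ => σ⁻¹) =O[atTop] fun σ => σ⁻¹ * log σ := by
  simpa using
    (isBigO_refl (fun σ : ℝ => σ⁻¹) atTop).mul (isLittleO_const_log_atTop (c := 1)).isBigO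

lemma ein_div_isBigO_inv (ha : 0 ≤ a) : (fun σ => ein (a / σ)) =O[atTop] fun σ => σ⁻¹ := by
  refine IsBigO.of_bound a ?_
  filter_upwards [eventually_gt_atTop 0] with σ hσ
  rw [norm_eq_abs, norm_of_nonneg (inv_nonneg.2 hσ.le), ← div_eq_mul_inv]
  exact abs_ein_le (by positivity)

lemma log_add_sub_log_isBigO_inv (ha : 0 ≤ a) :
    (fun σ => log (σ + a) - log σ) =O[atTop] fun σ => σ⁻¹ := by
  refine IsBigO.of_bound a ?_
  filter_upwards [eventually_gt_atTop 0] with σ hσ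
  have hle := log_le_sub_one_of_pos (x := (σ + a) / σ) (by positivity)
  have hnonneg := log_nonneg (x := (σ + a) / σ) ((le_div_iff₀ hσ).2 (by linarith))
  rw [log_div (by positivity) hσ.ne'] at hle hnonneg
  rw [norm_of_nonneg hnonneg, norm_of_nonneg (inv_nonneg.2 hσ.le)]
  calc _ ≤ (σ + a) / σ - 1 := hle
    _ = a * σ⁻¹ := by field_simp; ring

lemma exp_div_sub_one_isBigO_inv (a : ℝ) :
    (fun σ => exp (a / σ) - 1) =O[atTop] fun σ => σ⁻¹ := by
  refine IsBigO.of_bound (2 * |a|) ?_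
  filter_upwards [eventually_ge_atTop |a|, eventually_gt_atTop 0] with σ hσa hσ
  have hle : |a / σ| ≤ 1 := by rwa [abs_div, abs_of_pos hσ, div_le_one hσ]
  have h := abs_exp_sub_one_le hle
  rw [abs_div, abs_of_pos hσ] at h
  rwa [norm_eq_abs, norm_of_nonneg (inv_nonneg.2 hσ.le), mul_assoc, ← div_eq_mul_inv]

lemma expIntegralE₁_div_eventuallyEq (ha : 0 < a) :
    (fun σ => expIntegralE₁ (a / σ))
      =ᶠ[atTop] fun σ => constC - log a + log σ + ein (a / σ) := by
  filter_upwards [eventually_ge_atTop a] with σ hσ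
  have hσ0 : 0 < σ := ha.trans_le hσ
  rw [expIntegralE₁_eq_constC_sub_log_add_ein (by positivity) ((div_le_one hσ0).2 hσ),
    log_div ha.ne' hσ0.ne']
  ring

lemma expIntegralE₁_div_isBigO_log (ha : 0 < a) :
    (fun σ => expIntegralE₁ (a / σ)) =O[atTop] log := by
  refine IsBigO.congr' ?_ (expIntegralE₁_div_eventuallyEq ha).symm EventuallyEq.rfl
  refine (isLittleO_const_log_atTop.isBigO.add (isBigO_refl _ _)).add ?_
  exact (ein_div_isBigO_inv ha.le).trans
    ((tendsto_inv_atTop_zero.isBigO_one ℝ).trans isLittleO_const_log_atTop.isBigO)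

lemma exp_div_mul_expIntegralE₁_div_isBigO_log (ha : 0 < a) :
    (fun σ => exp (a / σ) * expIntegralE₁ (a / σ)) =O[atTop] log := by
  have hexp : (fun σ => exp (a / σ)) =O[atTop] fun _ => (1 : ℝ) :=
    ((continuous_exp.tendsto 0).comp (tendsto_const_nhds.div_atTop tendsto_id)).isBigO_one ℝ
  simpa using hexp.mul (expIntegralE₁_div_isBigO_log ha)

lemma dampedLogSeries_sub_isBigO (ha : 0 < a) :
    (fun σ => dampedLogSeries a σ - exp (a / σ) * expIntegralE₁ (a / σ))
      =O[atTop] fun σ => σ⁻¹ * log σ := by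
  refine (IsBigO.of_bound 1 ?_).trans
    ((isBigO_refl (fun σ : ℝ => σ⁻¹) atTop).mul (exp_div_mul_expIntegralE₁_div_isBigO_log ha))
  filter_upwards [eventually_gt_atTop 0] with σ hσ
  rw [one_mul, norm_eq_abs, norm_eq_abs]
  exact (abs_dampedLogSeries_sub_le ha hσ).trans (le_abs_self _)

theorem log_add_dampedLogSeries_sub_isBigO (ha : 0 < a) :
    (fun σ => (log a + dampedLogSeries a σ) - (log (σ + a) + constC))
      =O[atTop] fun σ => log σ / σ := by
  have hdecomp : (fun σ => (dampedLogSeries a σ - exp (a / σ) * expIntegralE₁ (a / σ))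
      + (exp (a / σ) - 1) * expIntegralE₁ (a / σ) + ein (a / σ) - (log (σ + a) - log σ))
      =ᶠ[atTop] fun σ => (log a + dampedLogSeries a σ) - (log (σ + a) + constC) := by
    filter_upwards [expIntegralE₁_div_eventuallyEq ha] with σ hσ
    rw [hσ]
    ring
  refine IsBigO.congr' ?_ hdecomp (Eventually.of_forall fun σ => inv_mul_eq_div σ (log σ))
  refine ((dampedLogSeries_sub_isBigO ha).add
    ((exp_div_sub_one_isBigO_inv a).mul (expIntegralE₁_div_isBigO_log ha))).add
    ((ein_div_isBigO_inv ha.le).trans inv_isBigO_inv_mul_log) |>.sub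
    ((log_add_sub_log_isBigO_inv ha.le).trans inv_isBigO_inv_mul_log)

end Asymptotics

end LogSeries

open LogSeries in
theorem log_series_asymptotics (N : ℕ) (hN : 2 ≤ N) :
    (fun σ : ℝ =>
        (Real.log N +
            ∑' n : ℕ, exp (-((n : ℝ) + 1) / σ) *
              Real.log (((n : ℝ) + 1 + N) / ((n : ℝ) + N))) -
          (Real.log (σ + N) + constC))
      =O[atTop] fun σ => Real.log σ / σ :=
  log_add_dampedLogSeries_sub_isBigO (Nat.cast_pos.2 (by omega))
end
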